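/- arXiv:1810.12275 — 8 statements merged into one kernel-verified Lean document; each statement's English description precedes it below -/
import Mathlib

section
/- Every infinite word contains powers of every order or antipowers of every order. Precisely: for every infinite word w over an arbitrary (possibly infinite) alphabet, either for every integer k ≥ 1 the word w contains a factor that is a k-power, or for every integer k ≥ 1 the word w contains a factor that is a k-antipower. -/
/-- `v` is a (finite) factor of the infinite word `w` : it occurs as a
contiguous block `w i, w (i+1), …` somewhere in `w`. -/
def IsFactor {A : Type*} (w : ℕ → A) (v : List A) : Prop :=
  ∃ i : ℕ, v = (List.range v.length).map (fun j => w (i + j))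

/-- A `k`-power: a concatenation of `k` copies of a single nonempty word. -/
def IsPower {A : Type*} (k : ℕ) (v : List A) : Prop :=
  ∃ u : List A, u ≠ [] ∧ v = (List.replicate k u).flatten

/-- A `k`-antipower: a concatenation of `k` pairwise distinct words of the same
positive length. -/
def IsAntipower {A : Type*} (k : ℕ) (v : List A) : Prop :=
  ∃ us : List (List A), us.length = k ∧ us.flatten = v ∧
    (∃ d : ℕ, 0 < d ∧ ∀ u ∈ us, u.length = d) ∧
    us.Pairwise (fun u₁ u₂ => u₁ ≠ u₂)

/-!
If `w` avoids `k`-antipowers, then for every length `n` two of the first `k` aligned blocks of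
length `n` coincide, say blocks `i < j`. By pigeonhole, among `k²+1` consecutive large lengths
two, `n₁ < n₂`, give the same pair `(i, j)`. Comparing the two coincidences shows that the
factor starting at `j n₁ + i (n₂ - n₁)` has period `(j - i)(n₂ - n₁)` over a length that grows
with `n₁`, so it contains a `K`-power for any prescribed `K`.
-/

open List

section

variable {A : Type*} (w : ℕ → A)

def factorAt (a n : ℕ) : List A := (range n).map fun j => w (a + j)

@[simp]
lemma length_factorAt (a n : ℕ) : (factorAt w a n).length = n := by
  simp [factorAt]

lemma isFactor_factorAt (a n : ℕ) : IsFactor w (factorAt w a n) :=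
  ⟨a, by simp [factorAt]⟩

lemma factorAt_add (a m n : ℕ) :
    factorAt w a (m + n) = factorAt w a m ++ factorAt w (a + m) n := by
  simp [factorAt, range_add, Nat.add_assoc]

lemma factorAt_eq_factorAt_iff {a b n : ℕ} :
    factorAt w a n = factorAt w b n ↔ ∀ δ < n, w (a + δ) = w (b + δ) := by
  simp [factorAt, map_inj_left]

lemma flatten_map_range_factorAt (a n k : ℕ) :
    ((range k).map fun s => factorAt w (a + s * n) n).flatten = factorAt w a (k * n) := by
  induction k with
  | zero => simp [factorAt]
  | succ k ih => rw [range_succ, map_append, flatten_append, ih, Nat.succ_mul, factorAt_add]; simp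

lemma isPower_factorAt_of_periodic {a q K : ℕ} (hq : 0 < q)
    (hper : ∀ δ, δ + q < K * q → w (a + q + δ) = w (a + δ)) :
    IsPower K (factorAt w a (K * q)) := by
  have hshift : ∀ s < K, factorAt w (a + s * q) q = factorAt w a q := by
    intro s hs
    induction s with
    | zero => simp
    | succ s ih =>
      rw [← ih (by omega), factorAt_eq_factorAt_iff]
      intro δ hδ
      have hlt : s * q + δ + q < K * q := by nlinarith
      rw [show a + (s + 1) * q + δ = a + q + (s * q + δ) by ring, hper _ hlt, Nat.add_assoc]
  refine ⟨factorAt w a q, ne_nil_of_length_pos (by simpa using hq), ?_⟩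
  rw [← flatten_map_range_factorAt, map_congr_left fun s hs => hshift s (mem_range.1 hs),
    map_const', length_range]

lemma exists_blocks_eq_of_forall_not_isAntipower {k n : ℕ} (hn : 0 < n)
    (hk : ∀ v, IsFactor w v → ¬ IsAntipower k v) :
    ∃ i j, i < j ∧ j < k ∧ ∀ δ < n, w (i * n + δ) = w (j * n + δ) := by
  have hdup : ¬ ((range k).map fun s => factorAt w (0 + s * n) n).Nodup := fun hnd =>
    hk _ (isFactor_factorAt w 0 (k * n))
      ⟨_, by simp, flatten_map_range_factorAt w 0 n k, ⟨n, hn, by simp⟩, hnd⟩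
  rw [nodup_map_iff_inj_on nodup_range] at hdup
  push Not at hdup
  obtain ⟨i, hi, j, hj, heq, hne⟩ := hdup
  simp only [zero_add, factorAt_eq_factorAt_iff, mem_range] at heq hi hj
  rcases lt_or_gt_of_ne hne with h | h
  · exact ⟨i, j, h, hj, heq⟩
  · exact ⟨j, i, h, hi, fun δ hδ => (heq δ hδ).symm⟩

lemma exists_isPower_of_blocks_eq {K i j n₁ n₂ : ℕ} (hij : i < j) (hn : n₁ < n₂)
    (hlong : (K * (j - i) + i) * (n₂ - n₁) ≤ n₁)
    (h₁ : ∀ δ < n₁, w (i * n₁ + δ) = w (j * n₁ + δ))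
    (h₂ : ∀ δ < n₂, w (i * n₂ + δ) = w (j * n₂ + δ)) :
    ∃ v, IsFactor w v ∧ IsPower K v := by
  obtain ⟨c, rfl⟩ := Nat.exists_eq_add_of_le hij.le
  obtain ⟨e, rfl⟩ := Nat.exists_eq_add_of_le hn.le
  simp only [Nat.add_sub_cancel_left] at hlong
  have hc : 0 < c := by omega
  have he : 0 < e := by omega
  refine ⟨_, isFactor_factorAt w ((i + c) * n₁ + i * e) (K * (c * e)),
    isPower_factorAt_of_periodic w (Nat.mul_pos hc he) fun δ hδ => ?_⟩
  have hδ : i * e + δ < n₁ := by nlinarith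
  calc w ((i + c) * n₁ + i * e + c * e + δ) = w ((i + c) * (n₁ + e) + δ) := by congr 1; ring
    _ = w (i * (n₁ + e) + δ) := (h₂ δ (by nlinarith)).symm
    _ = w (i * n₁ + (i * e + δ)) := by congr 1; ring
    _ = w ((i + c) * n₁ + (i * e + δ)) := h₁ _ hδ
    _ = w ((i + c) * n₁ + i * e + δ) := by congr 1; ring

end

lemma exists_lt_le_add_card_of_forall_ge_exists_mem {α : Type*} {s : Finset α}
    {P : ℕ → α → Prop} (N : ℕ) (h : ∀ n ≥ N, ∃ x ∈ s, P n x) :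
    ∃ x ∈ s, ∃ n₁ n₂, N ≤ n₁ ∧ n₁ < n₂ ∧ n₂ ≤ n₁ + s.card ∧ P n₁ x ∧ P n₂ x := by
  obtain ⟨x₀, -⟩ := h N le_rfl
  have : Nonempty α := ⟨x₀⟩
  choose! f hfs hf using h
  obtain ⟨m₁, hm₁, m₂, hm₂, hne, hfe⟩ :=
    Finset.exists_ne_map_eq_of_card_lt_of_maps_to (s := Finset.Icc N (N + s.card)) (t := s)
      (f := f) (by rw [Nat.card_Icc]; omega) fun m hm => hfs m (Finset.mem_Icc.1 hm).1
  rw [Finset.mem_Icc] at hm₁ hm₂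
  rcases lt_or_gt_of_ne hne with h | h
  · exact ⟨f m₁, hfs m₁ hm₁.1, m₁, m₂, hm₁.1, h, by omega, hf m₁ hm₁.1, hfe ▸ hf m₂ hm₂.1⟩
  · exact ⟨f m₂, hfs m₂ hm₂.1, m₂, m₁, hm₂.1, h, by omega, hf m₂ hm₂.1, hfe ▸ hf m₁ hm₁.1⟩

/-- Every infinite word (over an arbitrary alphabet) contains powers of every
order or antipowers of every order. -/
theorem every_infinite_word_powers_or_antipowers {A : Type*} (w : ℕ → A) :
    (∀ k : ℕ, 1 ≤ k → ∃ v : List A, IsFactor w v ∧ IsPower k v) ∨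
    (∀ k : ℕ, 1 ≤ k → ∃ v : List A, IsFactor w v ∧ IsAntipower k v) := by
  refine or_iff_not_imp_right.2 fun hanti K _ => ?_
  push Not at hanti
  obtain ⟨k, -, hk⟩ := hanti
  have hblocks : ∀ n ≥ (K + 1) * k * (k * k) + 1, ∃ x ∈ Finset.range k ×ˢ Finset.range k,
      x.1 < x.2 ∧ ∀ δ < n, w (x.1 * n + δ) = w (x.2 * n + δ) := fun n hn => by
    obtain ⟨i, j, hij, hjk, h⟩ :=
      exists_blocks_eq_of_forall_not_isAntipower w (n := n) (by omega) hk
    exact ⟨(i, j), Finset.mem_product.2 ⟨Finset.mem_range.2 (by omega), Finset.mem_range.2 hjk⟩,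
      hij, h⟩
  obtain ⟨⟨i, j⟩, hx, n₁, n₂, hN, hn, hclose, ⟨hij, h₁⟩, -, h₂⟩ :=
    exists_lt_le_add_card_of_forall_ge_exists_mem _ hblocks
  simp only [Finset.mem_product, Finset.mem_range, Finset.card_product, Finset.card_range]
    at hx hclose
  refine exists_isPower_of_blocks_eq w hij hn ?_ h₁ h₂
  calc (K * (j - i) + i) * (n₂ - n₁) ≤ ((K + 1) * k) * (k * k) := by
        gcongr
        · nlinarith [Nat.sub_le j i]
        · omega
    _ ≤ n₁ := by omega
end

section
/- The Sierpiński word s does not contain 11-antipowers: no factor of s is an 11-antipower. -/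
/-- The alphabet is `Bool`, with `true` playing the role of the letter `a` and
`false` the role of the letter `b`.
`sierpinskiApprox n` is the word `s_n`, defined by `s_0 = a` and
`s_{n+1} = s_n b^{3^n} s_n`; it has length `3^n` and is a prefix of `s_{n+1}`. -/
def sierpinskiApprox : ℕ → List Bool
  | 0 => [true]
  | n + 1 =>
      sierpinskiApprox n ++ List.replicate (3 ^ n) false ++ sierpinskiApprox n

/-- The Sierpiński word `s = lim_{n → ∞} s_n` : its letter at (0-based)
position `i` is the letter of `s_{i+1}` at position `i` (well defined since
`|s_{i+1}| = 3^{i+1} > i`, and each `s_n` is a prefix of `s_{n+1}`). -/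
def sierpinski (i : ℕ) : Bool := (sierpinskiApprox (i + 1)).getD i false

/-! ### The characteristic function of `a`-positions -/

/-- `inA n = true` iff all base-3 digits of `n` are `0` or `2`, i.e. iff the
Sierpiński word has letter `a` at position `n`. -/
def inA (n : ℕ) : Bool :=
  if n = 0 then true else (decide (n % 3 ≠ 1)) && inA (n / 3)
  termination_by n
  decreasing_by exact Nat.div_lt_self (Nat.pos_of_ne_zero (by assumption)) (by norm_num)

lemma inA_zero : inA 0 = true := by simp [inA]

lemma inA_rec (n : ℕ) : inA n = ((decide (n % 3 ≠ 1)) && inA (n / 3)) := by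
  by_cases h : n = 0
  · subst h; simp [inA]
  · rw [inA]; simp [h]

lemma inA_div3 {n : ℕ} (h : inA n = true) : inA (n / 3) = true := by
  rw [inA_rec] at h; exact (Bool.and_eq_true _ _ |>.mp h).2

lemma inA_mod3 {n : ℕ} (h : inA n = true) : n % 3 ≠ 1 := by
  rw [inA_rec] at h
  have := (Bool.and_eq_true _ _ |>.mp h).1
  simp at this
  exact this

/-- no two consecutive positions are both `a` -/
lemma inA_succ {n : ℕ} (h : inA n = true) : inA (n + 1) = false := by
  induction n using Nat.strong_induction_on with
  | _ n IH =>
    have hm3 : n % 3 = 0 ∨ n % 3 = 1 ∨ n % 3 = 2 := by omega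
    rcases hm3 with h0 | h1 | h2
    · -- n % 3 = 0 : (n+1) % 3 = 1
      rw [inA_rec (n+1)]
      have : (n + 1) % 3 = 1 := by omega
      simp [this]
    · exact absurd h1 (inA_mod3 h)
    · -- n % 3 = 2 : (n+1)/3 = n/3 + 1
      have hn : n ≠ 0 := by omega
      have hd : (n + 1) / 3 = n / 3 + 1 := by omega
      have hlt : n / 3 < n := Nat.div_lt_self (Nat.pos_of_ne_zero hn) (by norm_num)
      have := IH (n / 3) hlt (inA_div3 h)
      rw [inA_rec (n+1), hd, this]
      simp

lemma inA_mid : ∀ (m r : ℕ), r < 3 ^ m → inA (3 ^ m + r) = false := by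
  intro m
  induction m with
  | zero =>
    intro r hr
    interval_cases r
    rw [inA_rec]; simp
  | succ m IH =>
    intro r hr
    have h3 : 3 ^ (m + 1) = 3 * 3 ^ m := by ring
    have hmod : (3 ^ (m + 1) + r) % 3 = r % 3 := by omega
    have hdiv : (3 ^ (m + 1) + r) / 3 = 3 ^ m + r / 3 := by omega
    rw [inA_rec, hdiv, IH (r / 3) (by omega)]
    simp

lemma inA_high : ∀ (m r : ℕ), r < 3 ^ m → inA (2 * 3 ^ m + r) = inA r := by
  intro m
  induction m with
  | zero =>
    intro r hr
    interval_cases r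
    rw [inA_rec]; simp [inA_zero]
  | succ m IH =>
    intro r hr
    have h3 : 3 ^ (m + 1) = 3 * 3 ^ m := by ring
    have hmod : (2 * 3 ^ (m + 1) + r) % 3 = r % 3 := by omega
    have hdiv : (2 * 3 ^ (m + 1) + r) / 3 = 2 * 3 ^ m + r / 3 := by omega
    rw [inA_rec, hdiv, IH (r / 3) (by omega), hmod, inA_rec r]

lemma sierpinskiApprox_length (m : ℕ) : (sierpinskiApprox m).length = 3 ^ m := by
  induction m with
  | zero => simp [sierpinskiApprox]
  | succ m IH =>
    simp [sierpinskiApprox, IH]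
    ring

lemma getD_replicate_false (n i : ℕ) : (List.replicate n false).getD i false = false := by
  induction n generalizing i with
  | zero => simp
  | succ n IH =>
    cases i with
    | zero => simp [List.replicate]
    | succ i => simpa [List.replicate] using IH i

lemma sierpinskiApprox_getD : ∀ (m i : ℕ), i < 3 ^ m →
    (sierpinskiApprox m).getD i false = inA i := by
  intro m
  induction m with
  | zero =>
    intro i hi
    interval_cases i
    simp [sierpinskiApprox, inA_zero]
  | succ m IH =>
    intro i hi
    have hlen : (sierpinskiApprox m).length = 3 ^ m := sierpinskiApprox_length m
    have hlen2 : (sierpinskiApprox m ++ List.replicate (3 ^ m) false).length = 2 * 3 ^ m := by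
      simp [hlen]; ring
    show ((sierpinskiApprox m ++ List.replicate (3 ^ m) false) ++ sierpinskiApprox m).getD i false = inA i
    rcases Nat.lt_or_ge i (3 ^ m) with h1 | h1
    · rw [List.getD_append _ _ _ _ (by omega), List.getD_append _ _ _ _ (by omega)]
      exact IH i h1
    · rcases Nat.lt_or_ge i (2 * 3 ^ m) with h2 | h2
      · rw [List.getD_append _ _ _ _ (by omega), List.getD_append_right _ _ _ _ (by omega)]
        rw [getD_replicate_false]
        have : i = 3 ^ m + (i - 3 ^ m) := by omega
        rw [this, inA_mid m _ (by omega)]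
      · rw [List.getD_append_right _ _ _ _ (by omega), hlen2]
        have h3 : 3 ^ (m + 1) = 3 * 3 ^ m := by ring
        have : i - 2 * 3 ^ m < 3 ^ m := by omega
        rw [IH _ this]
        have hi' : i = 2 * 3 ^ m + (i - 2 * 3 ^ m) := by omega
        conv_rhs => rw [hi']
        exact (inA_high m _ this).symm

lemma sierpinski_eq_inA (i : ℕ) : sierpinski i = inA i := by
  have : i < 3 ^ (i + 1) := lt_of_lt_of_le (Nat.lt_pow_self (by norm_num : 1 < 3) : i < 3 ^ i)
    (Nat.pow_le_pow_right (by norm_num) (by omega))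
  exact sierpinskiApprox_getD (i + 1) i this

lemma inA_div9 {n : ℕ} (h : inA n = true) : inA (n / 9) = true := by
  have : n / 9 = n / 3 / 3 := by omega
  rw [this]
  exact inA_div3 (inA_div3 h)

lemma inA_mod9 {n : ℕ} (h : inA n = true) :
    n % 9 = 0 ∨ n % 9 = 2 ∨ n % 9 = 6 ∨ n % 9 = 8 := by
  have h1 := inA_mod3 h
  have h2 := inA_mod3 (inA_div3 h)
  omega

/-- if `x/9 = y+1` with `y ∈ A` then `x ∉ A` -/
lemma inA_of_div9 {x y : ℕ} (hy : inA y = true) (hx : x / 9 = y + 1) : inA x = false := by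
  by_contra h
  have hx' : inA x = true := by
    cases hxx : inA x
    · exact absurd hxx h
    · rfl
  have := inA_div9 hx'
  rw [hx] at this
  rw [inA_succ hy] at this
  exact absurd this (by simp)


section chain
variable {t : ℕ → ℕ} {d : ℕ}

lemma chain_mono (hsteps : ∀ j, j < 11 → t j + d ≤ t (j + 1) ∧ t (j + 1) ≤ t j + (d + 1)) :
    ∀ a b, a ≤ b → b ≤ 11 → t a ≤ t b := by
  intro a b hab
  induction hab with
  | refl => intro _; exact le_rfl
  | @step m h IH =>
    intro hb
    simp only [Nat.succ_eq_add_one] at *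
    have h1 := (hsteps m (by omega)).1
    have h2 := IH (by omega)
    omega

lemma chain_upper (hsteps : ∀ j, j < 11 → t j + d ≤ t (j + 1) ∧ t (j + 1) ≤ t j + (d + 1)) :
    ∀ a b, a ≤ b → b ≤ 11 → t b ≤ t a + (b - a) * (d + 1) := by
  intro a b hab
  induction hab with
  | refl => intro _; simp
  | @step m h IH =>
    intro hb
    simp only [Nat.succ_eq_add_one] at *
    have h1 := (hsteps m (by omega)).2
    have h2 := IH (by omega)
    have hcoef : (m + 1 - a) * (d + 1) = (m - a) * (d + 1) + (d + 1) := by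
      have hma : m + 1 - a = (m - a) + 1 := by
        have := Nat.succ_sub h
        omega
      rw [hma]; ring
    omega

end chain

/-! ### The main combinatorial lemma -/

/-- Among 11 consecutive intervals of step between `d` and `d+1`, at least two
closed intervals `[t j, t (j+1)]` contain no `a`-position. -/
lemma two_free : ∀ (d : ℕ), 1 ≤ d → ∀ (t : ℕ → ℕ),
    (∀ j, j < 11 → t j + d ≤ t (j + 1) ∧ t (j + 1) ≤ t j + (d + 1)) →
    ∃ j1 j2, j1 < j2 ∧ j2 < 11 ∧
      (∀ x, t j1 ≤ x → x ≤ t (j1 + 1) → inA x = false) ∧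
      (∀ x, t j2 ≤ x → x ≤ t (j2 + 1) → inA x = false) := by
  intro d
  induction d using Nat.strong_induction_on with
  | _ d IH =>
    intro hd t hsteps
    by_cases hd3 : 3 ≤ d
    · -- descent: pass to t j / 3 with step d / 3
      have hlt : d / 3 < d := Nat.div_lt_self (by omega) (by norm_num)
      have hd' : 1 ≤ d / 3 := by omega
      obtain ⟨j1, j2, hj12, hj2, hf1, hf2⟩ := IH (d / 3) hlt hd' (fun j => t j / 3)
        (by
          intro j hj
          obtain ⟨h1, h2⟩ := hsteps j hj
          constructor <;> omega)
      refine ⟨j1, j2, hj12, hj2, ?_, ?_⟩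
      · intro x hx1 hx2
        by_contra h
        have hx : inA x = true := by simpa using h
        have := hf1 (x / 3) (Nat.div_le_div_right hx1) (Nat.div_le_div_right hx2)
        rw [inA_div3 hx] at this
        exact absurd this (by simp)
      · intro x hx1 hx2
        by_contra h
        have hx : inA x = true := by simpa using h
        have := hf2 (x / 3) (Nat.div_le_div_right hx1) (Nat.div_le_div_right hx2)
        rw [inA_div3 hx] at this
        exact absurd this (by simp)
    · -- base case : d ∈ {1, 2}
      have hd2 : d ≤ 2 := by omega
      clear IH hd3
      -- monotonicity facts
      have tmono : ∀ a b, a ≤ b → b ≤ 11 → t a ≤ t b := chain_mono hsteps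
      have tlt : ∀ a b, a < b → b ≤ 11 → t a + d ≤ t b := by
        intro a b hab hb
        have h1 := (hsteps a (by omega)).1
        have h2 := tmono (a + 1) b (by omega) hb
        omega
      have tupper : ∀ a b, a ≤ b → b ≤ 11 → t b ≤ t a + (b - a) * (d + 1) :=
        chain_upper hsteps
      by_cases hex : ∃ a, inA a = true ∧ t 0 ≤ a ∧ a ≤ t 11
      · obtain ⟨a, ha, ha0, ha1⟩ := hex
        by_cases hex2 : ∃ a', inA a' = true ∧ t 0 ≤ a' ∧ a' ≤ t 11 ∧ a' / 9 ≠ a / 9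
        · -- two clusters: cross the big run between them
          obtain ⟨a', ha', ha0', ha1', hne⟩ := hex2
          -- wlog put the smaller cluster first
          have key : ∀ (b b' : ℕ), inA b = true → inA b' = true →
              t 0 ≤ b → b' ≤ t 11 → b / 9 < b' / 9 →
              ∃ j1 j2, j1 < j2 ∧ j2 < 11 ∧
                (∀ x, t j1 ≤ x → x ≤ t (j1 + 1) → inA x = false) ∧
                (∀ x, t j2 ≤ x → x ≤ t (j2 + 1) → inA x = false) := by
            intro b b' hb hb' hb0 hb1 hbb
            set y := b / 9 with hy
            have hyA : inA y = true := inA_div9 hb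
            have hy'A : inA (b' / 9) = true := inA_div9 hb'
            have hy1 : inA (y + 1) = false := inA_succ hyA
            have hy2 : b' / 9 ≠ y + 1 := by
              intro h
              rw [h, hy1] at hy'A
              exact absurd hy'A (by simp)
            have hy2' : y + 2 ≤ b' / 9 := by omega
            have hbu : b ≤ 9 * y + 8 := by omega
            have hb'l : 9 * y + 18 ≤ b' := by omega
            have ht0 : t 0 ≤ 9 * y + 8 := by omega
            have ht11 : 9 * y + 18 ≤ t 11 := by omega
            set P : ℕ → Prop := fun j => t j ≤ 9 * y + 8 with hP
            have hdec : DecidablePred P := fun j => Nat.decLe _ _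
            set js := Nat.findGreatest P 11 with hjs
            have hPjs : P js := Nat.findGreatest_spec (Nat.zero_le 11) ht0
            have hjsle : js ≤ 11 := Nat.findGreatest_le 11
            have hjs8 : js ≤ 8 := by
              by_contra hcon
              have h9 : 9 ≤ js := by omega
              have := tupper js 11 (by omega) (by omega)
              have hc : (11 - js) ≤ 2 := by omega
              have : t 11 ≤ t js + 2 * (d + 1) := by
                calc t 11 ≤ t js + (11 - js) * (d + 1) := this
                _ ≤ t js + 2 * (d + 1) := by
                    have := Nat.mul_le_mul_right (d + 1) hc
                    omega
              have hPv : t js ≤ 9 * y + 8 := hPjs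
              omega
            have hg1 : 9 * y + 9 ≤ t (js + 1) := by
              have := Nat.findGreatest_is_greatest (P := P) (by omega : js < js + 1) (by omega)
              have : ¬ (t (js + 1) ≤ 9 * y + 8) := this
              omega
            have hup : t (js + 3) ≤ 9 * y + 17 := by
              have h1 := tupper js (js + 3) (by omega) (by omega)
              have hc : (js + 3 - js) = 3 := by omega
              rw [hc] at h1
              have hPv : t js ≤ 9 * y + 8 := hPjs
              have : 3 * (d + 1) ≤ 9 := by omega
              omega
            have hfree : ∀ x, t (js + 1) ≤ x → x ≤ t (js + 3) → inA x = false := by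
              intro x hx1 hx2
              have hx9 : x / 9 = y + 1 := by omega
              exact inA_of_div9 hyA hx9
            refine ⟨js + 1, js + 2, by omega, by omega, ?_, ?_⟩
            · intro x hx1 hx2
              have e2 : t (js + 1 + 1) = t (js + 2) := rfl
              have := tmono (js + 2) (js + 3) (by omega) (by omega)
              exact hfree x hx1 (by omega)
            · intro x hx1 hx2
              have e3 : t (js + 2 + 1) = t (js + 3) := rfl
              have := tmono (js + 1) (js + 2) (by omega) (by omega)
              exact hfree x (by omega) hx2
          rcases Nat.lt_or_ge (a / 9) (a' / 9) with h | h
          · exact key a a' ha ha' ha0 ha1' h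
          · exact key a' a ha' ha ha0' ha1 (by omega)
        · -- single cluster
          push_neg at hex2
          set y := a / 9 with hy
          have hone : ∀ x, inA x = true → t 0 ≤ x → x ≤ t 11 → x / 9 = y :=
            fun x h1 h2 h3 => hex2 x h1 h2 h3
          by_contra hcon
          set Free : ℕ → Prop :=
            fun j => ∀ x, t j ≤ x → x ≤ t (j + 1) → inA x = false with hFree
          have hcon' : ∀ j1 j2, j1 < j2 → j2 < 11 → Free j1 → Free j2 → False :=
            fun j1 j2 h1 h2 f1 f2 => hcon ⟨j1, j2, h1, h2, f1, f2⟩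
          -- a non-free interval has a witness in the cluster 9y + {0,2,6,8}
          have hwit : ∀ j, j < 11 → ¬ Free j →
              ∃ x, t j ≤ x ∧ x ≤ t (j + 1) ∧ x / 9 = y ∧
                (x % 9 = 0 ∨ x % 9 = 2 ∨ x % 9 = 6 ∨ x % 9 = 8) := by
            intro j hj hnf
            have hnf' : ¬ (∀ x, t j ≤ x → x ≤ t (j + 1) → inA x = false) := hnf
            push_neg at hnf'
            obtain ⟨x, hx1, hx2, hx3⟩ := hnf'
            have hxA : inA x = true := by simpa using hx3
            have h0 : t 0 ≤ x := le_trans (tmono 0 j (by omega) (by omega)) hx1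
            have h1 : x ≤ t 11 := le_trans hx2 (tmono (j + 1) 11 (by omega) (by omega))
            exact ⟨x, hx1, hx2, hone x hxA h0 h1, inA_mod9 hxA⟩
          -- five pairwise-distant non-free intervals give a contradiction
          have helper5 : ∀ j1 j2 j3 j4 j5, j1 + 2 ≤ j2 → j2 + 2 ≤ j3 → j3 + 2 ≤ j4 →
              j4 + 2 ≤ j5 → j5 < 11 → ¬ Free j1 → ¬ Free j2 → ¬ Free j3 → ¬ Free j4 →
              ¬ Free j5 → False := by
            intro j1 j2 j3 j4 j5 h12 h23 h34 h45 h5 n1 n2 n3 n4 n5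
            obtain ⟨x1, a1, b1, c1, m1⟩ := hwit j1 (by omega) n1
            obtain ⟨x2, a2, b2, c2, m2⟩ := hwit j2 (by omega) n2
            obtain ⟨x3, a3, b3, c3, m3⟩ := hwit j3 (by omega) n3
            obtain ⟨x4, a4, b4, c4, m4⟩ := hwit j4 (by omega) n4
            obtain ⟨x5, a5, b5, c5, m5⟩ := hwit j5 (by omega) n5
            have l12 : x1 < x2 := by
              have := tlt (j1 + 1) j2 (by omega) (by omega); omega
            have l23 : x2 < x3 := by
              have := tlt (j2 + 1) j3 (by omega) (by omega); omega
            have l34 : x3 < x4 := by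
              have := tlt (j3 + 1) j4 (by omega) (by omega); omega
            have l45 : x4 < x5 := by
              have := tlt (j4 + 1) j5 (by omega) (by omega); omega
            omega
          -- among the intervals 0,2,4,6,8,10 at most one is free
          by_cases f0 : Free 0
          · exact helper5 2 4 6 8 10 (by omega) (by omega) (by omega) (by omega) (by omega)
              (fun h => hcon' 0 2 (by omega) (by omega) f0 h)
              (fun h => hcon' 0 4 (by omega) (by omega) f0 h)
              (fun h => hcon' 0 6 (by omega) (by omega) f0 h)
              (fun h => hcon' 0 8 (by omega) (by omega) f0 h)
              (fun h => hcon' 0 10 (by omega) (by omega) f0 h)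
          · by_cases f2 : Free 2
            · exact helper5 0 4 6 8 10 (by omega) (by omega) (by omega) (by omega) (by omega)
                f0
                (fun h => hcon' 2 4 (by omega) (by omega) f2 h)
                (fun h => hcon' 2 6 (by omega) (by omega) f2 h)
                (fun h => hcon' 2 8 (by omega) (by omega) f2 h)
                (fun h => hcon' 2 10 (by omega) (by omega) f2 h)
            · by_cases f4 : Free 4
              · exact helper5 0 2 6 8 10 (by omega) (by omega) (by omega) (by omega) (by omega)
                  f0 f2
                  (fun h => hcon' 4 6 (by omega) (by omega) f4 h)
                  (fun h => hcon' 4 8 (by omega) (by omega) f4 h)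
                  (fun h => hcon' 4 10 (by omega) (by omega) f4 h)
              · by_cases f6 : Free 6
                · exact helper5 0 2 4 8 10 (by omega) (by omega) (by omega) (by omega) (by omega)
                    f0 f2 f4
                    (fun h => hcon' 6 8 (by omega) (by omega) f6 h)
                    (fun h => hcon' 6 10 (by omega) (by omega) f6 h)
                · by_cases f8 : Free 8
                  · exact helper5 0 2 4 6 10 (by omega) (by omega) (by omega) (by omega)
                      (by omega) f0 f2 f4 f6
                      (fun h => hcon' 8 10 (by omega) (by omega) f8 h)
                  · exact helper5 0 2 4 6 8 (by omega) (by omega) (by omega) (by omega)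
                      (by omega) f0 f2 f4 f6 f8
      · -- no a in range at all : intervals 0 and 1 are free
        push_neg at hex
        have hfree : ∀ j, j < 11 → ∀ x, t j ≤ x → x ≤ t (j + 1) → inA x = false := by
          intro j hj x hx1 hx2
          have h0 : t 0 ≤ x := le_trans (tmono 0 j (by omega) (by omega)) hx1
          have h1 : x ≤ t 11 := le_trans hx2 (tmono (j + 1) 11 (by omega) (by omega))
          by_contra hxx
          have hxA : inA x = true := by simpa using hxx
          have := hex x hxA h0; omega
        exact ⟨0, 1, by omega, by omega, hfree 0 (by omega), hfree 1 (by omega)⟩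

/-! ### Assembly -/

lemma block_eq (w : ℕ → Bool) : ∀ (us : List (List Bool)) (i d : ℕ),
    (∀ u ∈ us, u.length = d) →
    us.flatten = (List.range (us.length * d)).map (fun x => w (i + x)) →
    ∀ (j : ℕ) (u : List Bool), us[j]? = some u →
      u = (List.range d).map (fun x => w (i + j * d + x)) := by
  intro us
  induction us with
  | nil => intro i d _ _ j u h; simp at h
  | cons u0 rest IH =>
    intro i d hlen hflat j u hj
    have hu0 : u0.length = d := hlen u0 (by simp)
    have hrest : ∀ u ∈ rest, u.length = d := fun u hu => hlen u (by simp [hu])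
    have hlc : (u0 :: rest).length * d = d + rest.length * d := by
      simp [List.length_cons]; ring
    rw [List.flatten_cons, hlc, List.range_add, List.map_append, List.map_map] at hflat
    have hlen1 : u0.length = ((List.range d).map fun x => w (i + x)).length := by
      simp [hu0]
    obtain ⟨h1, h2⟩ := List.append_inj hflat hlen1
    have h2' : rest.flatten = (List.range (rest.length * d)).map (fun x => w ((i + d) + x)) := by
      rw [h2]
      apply List.map_congr_left
      intro x _
      simp [Function.comp]
      congr 1
      omega
    cases j with
    | zero =>
      simp at hj
      subst hj
      rw [h1]
      apply List.map_congr_left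
      intro x _
      congr 1
      omega
    | succ jj =>
      have hj' : rest[jj]? = some u := by simpa using hj
      have := IH (i + d) d hrest h2' jj u hj'
      rw [this]
      apply List.map_congr_left
      intro x _
      congr 1
      have : (jj + 1) * d = jj * d + d := by ring
      omega

/-- The Sierpiński word does not contain `11`-antipowers. -/
theorem sierpinski_no_11_antipower :
    ¬ ∃ v : List Bool, IsFactor sierpinski v ∧ IsAntipower 11 v := by
  rintro ⟨v, ⟨i, hv⟩, us, hlen, hflat, ⟨d, hd, hall⟩, hpw⟩
  -- the length of v
  have hmapl : us.map List.length = List.replicate 11 d := by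
    rw [List.eq_replicate_iff]
    constructor
    · simp [hlen]
    · intro b hb
      obtain ⟨u, hu, hub⟩ := List.mem_map.mp hb
      rw [← hub]; exact hall u hu
  have hvlen : v.length = us.length * d := by
    rw [← hflat, List.length_flatten, hmapl, List.sum_replicate, hlen]
    simp [Nat.mul_comm]
  have hflat' : us.flatten = (List.range (us.length * d)).map (fun x => sierpinski (i + x)) := by
    rw [hflat, hv, hvlen]
  -- apply the combinatorial lemma to t j = i + j * d
  obtain ⟨j1, j2, hj12, hj2, hf1, hf2⟩ := two_free d hd (fun j => i + j * d) (by
    intro j hj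
    have he : (j + 1) * d = j * d + d := by ring
    omega)
  -- both blocks are all-b
  have hblock : ∀ (j : ℕ) (hjl : j < us.length),
      (∀ x, i + j * d ≤ x → x ≤ i + (j + 1) * d → inA x = false) →
      us[j]'hjl = List.replicate d false := by
    intro j hjl hfree
    have := block_eq sierpinski us i d hall hflat' j (us[j]'hjl)
      (List.getElem?_eq_getElem hjl)
    rw [this, List.eq_replicate_iff]
    constructor
    · simp
    · intro b hb
      obtain ⟨x, hx, hxb⟩ := List.mem_map.mp hb
      have hxd : x < d := List.mem_range.mp hx
      rw [← hxb, sierpinski_eq_inA]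
      apply hfree
      · omega
      · have he : (j + 1) * d = j * d + d := by ring
        omega
  have hb1 := hblock j1 (by omega) hf1
  have hb2 := hblock j2 (by omega) hf2
  rw [List.pairwise_iff_getElem] at hpw
  have := hpw j1 j2 (by omega) (by omega) hj12
  rw [hb1, hb2] at this
  exact this rfl
end

section
/- The Sierpiński word s does not contain abelian 11-antipowers: no factor of s is an abelian 11-antipower. -/
/-- The Parikh vector of a finite word: the number of occurrences of each letter. -/
def parikh {A : Type*} [DecidableEq A] (u : List A) : A → ℕ := fun a => u.count a

/-- An abelian `k`-antipower: a concatenation of `k` words of the same positive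
length with pairwise distinct Parikh vectors. -/
def IsAbelianAntipower {A : Type*} [DecidableEq A] (k : ℕ) (v : List A) : Prop :=
  ∃ us : List (List A), us.length = k ∧ us.flatten = v ∧
    (∃ d : ℕ, 0 < d ∧ ∀ u ∈ us, u.length = d) ∧
    us.Pairwise (fun u₁ u₂ => parikh u₁ ≠ parikh u₂)


def inC : ℕ → Bool
  | 0 => true
  | n+1 => (((n+1) % 3 != 1)) && inC ((n+1)/3)
decreasing_by exact Nat.div_lt_self (Nat.succ_pos _) (by norm_num)

lemma inC_zero : inC 0 = true := by simp [inC]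

lemma inC_pos (n : ℕ) (h : n ≠ 0) : inC n = ((n % 3 != 1) && inC (n/3)) := by
  cases n with
  | zero => exact absurd rfl h
  | succ m => rw [inC]

lemma inC_mul3 (u : ℕ) : inC (3*u) = inC u := by
  cases u with
  | zero => simp
  | succ m =>
    rw [inC_pos (3*(m+1)) (by omega)]
    have h1 : (3*(m+1)) % 3 = 0 := by omega
    have h2 : (3*(m+1)) / 3 = m+1 := by omega
    rw [h1, h2]
    simp

lemma inC_mul3_add1 (u : ℕ) : inC (3*u+1) = false := by
  rw [inC_pos (3*u+1) (by omega)]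
  have h1 : (3*u+1) % 3 = 1 := by omega
  rw [h1]
  simp

lemma inC_mul3_add2 (u : ℕ) : inC (3*u+2) = inC u := by
  rw [inC_pos (3*u+2) (by omega)]
  have h1 : (3*u+2) % 3 = 2 := by omega
  have h2 : (3*u+2) / 3 = u := by omega
  rw [h1, h2]
  simp

lemma inC_div3 {n : ℕ} (h : inC n = true) : inC (n/3) = true := by
  rcases Nat.eq_zero_or_pos n with h0 | h0
  · subst h0; simpa using h
  · rw [inC_pos n (by omega)] at h
    exact (Bool.and_eq_true _ _ |>.mp h).2

lemma inC_mod3 {n : ℕ} (h : inC n = true) : n % 3 ≠ 1 := by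
  rcases Nat.eq_zero_or_pos n with h0 | h0
  · subst h0; omega
  · rw [inC_pos n (by omega)] at h
    have := (Bool.and_eq_true _ _ |>.mp h).1
    simpa using this

lemma inC_divPow (r : ℕ) : ∀ n : ℕ, inC n = true → inC (n / 3^r) = true := by
  induction r with
  | zero => intro n h; simpa using h
  | succ r ih =>
    intro n h
    have : n / 3^(r+1) = (n / 3^r) / 3 := by
      rw [Nat.div_div_eq_div_mul, ← pow_succ]
    rw [this]
    exact inC_div3 (ih n h)

lemma not_inC_adj : ∀ n : ℕ, ¬(inC n = true ∧ inC (n+1) = true) := by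
  intro n
  induction n using Nat.strong_induction_on with
  | _ n ih =>
    rintro ⟨h1, h2⟩
    have hm1 := inC_mod3 h1
    have hm2 := inC_mod3 h2
    have : n % 3 = 0 ∨ n % 3 = 2 := by omega
    rcases this with h | h
    · exact hm2 (by omega)
    · have e1 : n = 3*(n/3)+2 := by omega
      have e2 : n+1 = 3*(n/3+1) := by omega
      rw [e1, inC_mul3_add2] at h1
      rw [e2, inC_mul3] at h2
      exact ih (n/3) (by omega) ⟨h1, h2⟩

lemma not_inC_add3 (n : ℕ) : ¬(inC n = true ∧ inC (n+3) = true) := by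
  rintro ⟨h1, h2⟩
  have d1 := inC_div3 h1
  have d2 := inC_div3 h2
  have e : (n+3)/3 = n/3 + 1 := by omega
  rw [e] at d2
  exact not_inC_adj (n/3) ⟨d1, d2⟩

lemma not_inC_ap2 (n : ℕ) : ¬(inC n = true ∧ inC (n+2) = true ∧ inC (n+4) = true) := by
  rintro ⟨h1, h2, h3⟩
  have hm1 := inC_mod3 h1
  have hm2 := inC_mod3 h2
  have hm3 := inC_mod3 h3
  omega

lemma not_three (c1 c2 c3 : ℕ) (h12 : c1 < c2) (h23 : c2 < c3) (hspan : c3 ≤ c1 + 5)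
    (g1 : inC c1 = true) (g2 : inC c2 = true) (g3 : inC c3 = true) : False := by
  have hc2 : c2 = c1 + 1 ∨ c2 = c1 + 2 ∨ c2 = c1 + 3 ∨ c2 = c1 + 4 := by omega
  rcases hc2 with h | h | h | h
  · exact not_inC_adj c1 ⟨g1, by rw [← h]; exact g2⟩
  · have hc3 : c3 = c2 + 1 ∨ c3 = c2 + 2 ∨ c3 = c2 + 3 := by omega
    rcases hc3 with h' | h' | h'
    · exact not_inC_adj c2 ⟨g2, by rw [← h']; exact g3⟩
    · exact not_inC_ap2 c1 ⟨g1, by rw [show c1+2 = c2 by omega]; exact g2,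
        by rw [show c1+4 = c3 by omega]; exact g3⟩
    · exact not_inC_add3 c2 ⟨g2, by rw [← h']; exact g3⟩
  · exact not_inC_add3 c1 ⟨g1, by rw [show c1+3 = c2 by omega]; exact g2⟩
  · have h' : c3 = c2 + 1 := by omega
    exact not_inC_adj c2 ⟨g2, by rw [← h']; exact g3⟩

/-- In any 6 consecutive starting positions there are two "free pairs". -/
lemma twoFree (w : ℕ) : ∃ v1 v2 : ℕ, w ≤ v1 ∧ v1 < v2 ∧ v2 + 1 ≤ w + 6 ∧
    inC v1 = false ∧ inC (v1+1) = false ∧ inC v2 = false ∧ inC (v2+1) = false := by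
  set u := (w+2)/3 with hu
  have h3u : w ≤ 3*u ∧ 3*u ≤ w + 2 := by omega
  cases hC : inC u with
  | false =>
    refine ⟨3*u, 3*u+1, by omega, by omega, by omega, ?_, ?_, ?_, ?_⟩
    · rw [inC_mul3]; exact hC
    · rw [inC_mul3_add1]
    · rw [inC_mul3_add1]
    · rw [show 3*u+1+1 = 3*u+2 by omega, inC_mul3_add2]; exact hC
  | true =>
    have hnext : inC (u+1) = false := by
      cases h : inC (u+1) with
      | false => rfl
      | true => exact absurd ⟨hC, h⟩ (not_inC_adj u)
    by_cases hpos : 3*u ≤ w + 1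
    · refine ⟨3*u+3, 3*u+4, by omega, by omega, by omega, ?_, ?_, ?_, ?_⟩
      · rw [show 3*u+3 = 3*(u+1) by ring, inC_mul3]; exact hnext
      · rw [show 3*u+3+1 = 3*(u+1)+1 by ring, inC_mul3_add1]
      · rw [show 3*u+4 = 3*(u+1)+1 by ring, inC_mul3_add1]
      · rw [show 3*u+4+1 = 3*(u+1)+2 by ring, inC_mul3_add2]; exact hnext
    · -- 3*u = w+2
      have h2 : 3*u = w + 2 := by omega
      have hu1 : 1 ≤ u := by omega
      have hprev : inC (u-1) = false := by
        cases h : inC (u-1) with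
        | false => rfl
        | true => exact absurd ⟨h, by rw [show u-1+1 = u by omega]; exact hC⟩ (not_inC_adj (u-1))
      refine ⟨3*u-2, 3*u+3, by omega, by omega, by omega, ?_, ?_, ?_, ?_⟩
      · rw [show 3*u-2 = 3*(u-1)+1 by omega, inC_mul3_add1]
      · rw [show 3*u-2+1 = 3*(u-1)+2 by omega, inC_mul3_add2]; exact hprev
      · rw [show 3*u+3 = 3*(u+1) by ring, inC_mul3]; exact hnext
      · rw [show 3*u+3+1 = 3*(u+1)+1 by ring, inC_mul3_add1]; 

lemma approx_length (n : ℕ) : (sierpinskiApprox n).length = 3^n := by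
  induction n with
  | zero => simp [sierpinskiApprox]
  | succ n ih =>
    simp only [sierpinskiApprox, List.length_append, List.length_replicate, ih, pow_succ]
    omega

lemma rep_getD (k t : ℕ) : (List.replicate k false).getD t false = false := by
  simp [List.getD]

lemma inC_top2 (n : ℕ) : ∀ t : ℕ, t < 3^n → inC (2*3^n + t) = inC t := by
  induction n with
  | zero =>
    intro t ht
    interval_cases t
    rw [show 2*3^0 + 0 = 3*0+2 by norm_num, inC_mul3_add2]
  | succ n ih =>
    intro t ht
    have ht3 : t < 3^n * 3 := by rw [← pow_succ]; exact ht
    have hm : t % 3 = 0 ∨ t % 3 = 1 ∨ t % 3 = 2 := by omega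
    rcases hm with hm | hm | hm
    · obtain ⟨q, rfl⟩ : ∃ q, t = 3*q := ⟨t/3, by omega⟩
      rw [show 2*3^(n+1) + 3*q = 3*(2*3^n + q) by rw [pow_succ]; ring,
        inC_mul3, inC_mul3, ih q (by omega)]
    · obtain ⟨q, rfl⟩ : ∃ q, t = 3*q+1 := ⟨t/3, by omega⟩
      rw [show 2*3^(n+1) + (3*q+1) = 3*(2*3^n + q)+1 by rw [pow_succ]; ring,
        inC_mul3_add1, inC_mul3_add1]
    · obtain ⟨q, rfl⟩ : ∃ q, t = 3*q+2 := ⟨t/3, by omega⟩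
      rw [show 2*3^(n+1) + (3*q+2) = 3*(2*3^n + q)+2 by rw [pow_succ]; ring,
        inC_mul3_add2, inC_mul3_add2, ih q (by omega)]

lemma inC_one : inC 1 = false := by
  have := inC_mul3_add1 0; simpa using this

lemma approx_getD (n : ℕ) : ∀ i : ℕ, i < 3^n → (sierpinskiApprox n).getD i false = inC i := by
  induction n with
  | zero =>
    intro i hi
    interval_cases i
    simp [sierpinskiApprox, inC_zero]
  | succ n ih =>
    intro i hi
    have hlen : (sierpinskiApprox n).length = 3^n := approx_length n
    have hlen2 : (sierpinskiApprox n ++ List.replicate (3^n) false).length = 2*3^n := by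
      simp [hlen]; omega
    have hi3 : i < 3^n * 3 := by rw [← pow_succ]; exact hi
    show ((sierpinskiApprox n ++ List.replicate (3^n) false) ++ sierpinskiApprox n).getD i false = inC i
    by_cases h1 : i < 3^n
    · rw [List.getD_append _ _ _ _ (by omega), List.getD_append _ _ _ _ (by omega)]
      exact ih i h1
    · by_cases h2 : i < 2*3^n
      · rw [List.getD_append _ _ _ _ (by omega), List.getD_append_right _ _ _ _ (by omega),
          hlen, rep_getD]
        cases hC : inC i with
        | false => rfl
        | true =>
          exfalso
          have hdiv := inC_divPow n i hC
          have : i / 3^n = 1 := Nat.div_eq_of_lt_le (by omega) (by omega)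
          rw [this, inC_one] at hdiv
          exact Bool.false_ne_true hdiv
      · rw [List.getD_append_right _ _ _ _ (by omega), hlen2]
        rw [ih (i - 2*3^n) (by omega)]
        have := inC_top2 n (i - 2*3^n) (by omega)
        rw [show 2*3^n + (i - 2*3^n) = i by omega] at this
        rw [this]

lemma sierpinski_eq_inC (i : ℕ) : sierpinski i = inC i := by
  have h1 : i < 3^i := Nat.lt_pow_self (by norm_num : 1 < 3)
  have h2 : (3:ℕ)^i ≤ 3^(i+1) := Nat.pow_le_pow_right (by norm_num) (Nat.le_succ i)
  exact approx_getD (i+1) i (by omega)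

lemma not_three_in_window (lo c1 c2 c3 : ℕ) (h12 : c1 ≠ c2) (h13 : c1 ≠ c3) (h23 : c2 ≠ c3)
    (b1 : lo ≤ c1) (b1' : c1 ≤ lo + 5) (b2 : lo ≤ c2) (b2' : c2 ≤ lo + 5)
    (b3 : lo ≤ c3) (b3' : c3 ≤ lo + 5)
    (g1 : inC c1 = true) (g2 : inC c2 = true) (g3 : inC c3 = true) : False := by
  rcases Nat.lt_trichotomy c1 c2 with h | h | h
  · rcases Nat.lt_trichotomy c2 c3 with h' | h' | h'
    · exact not_three c1 c2 c3 h h' (by omega) g1 g2 g3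
    · omega
    · rcases Nat.lt_trichotomy c1 c3 with h'' | h'' | h''
      · exact not_three c1 c3 c2 h'' h' (by omega) g1 g3 g2
      · omega
      · exact not_three c3 c1 c2 h'' h (by omega) g3 g1 g2
  · omega
  · rcases Nat.lt_trichotomy c1 c3 with h' | h' | h'
    · exact not_three c2 c1 c3 h h' (by omega) g2 g1 g3
    · omega
    · rcases Nat.lt_trichotomy c2 c3 with h'' | h'' | h''
      · exact not_three c2 c3 c1 h'' h' (by omega) g2 g3 g1
      · omega
      · exact not_three c3 c2 c1 h'' h (by omega) g3 g2 g1

lemma two_false_windows (i d : ℕ) (hd : 0 < d) :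
    ∃ j1 j2 : ℕ, j1 < 11 ∧ j2 < 11 ∧ j1 ≠ j2 ∧
      (∀ t, t < d → sierpinski (i + j1*d + t) = false) ∧
      (∀ t, t < d → sierpinski (i + j2*d + t) = false) := by
  set r := Nat.log 3 d + 1 with hr
  set e := 3 ^ r with he
  have hde : d < e := Nat.lt_pow_succ_log_self (by norm_num) d
  have he3 : e ≤ 3 * d := by
    have h1 : (3:ℕ) ^ Nat.log 3 d ≤ d := Nat.pow_log_le_self 3 (by omega)
    rw [he, hr, pow_succ]
    omega
  have he0 : 0 < e := Nat.pow_pos (by norm_num)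
  set b : ℕ → ℕ := fun j => (i + j*d)/e with hb
  have mono : ∀ j j' : ℕ, j ≤ j' → b j ≤ b j' := by
    intro j j' hjj
    apply Nat.div_le_div_right
    have : j * d ≤ j' * d := Nat.mul_le_mul_right d hjj
    omega
  have bstep : ∀ j, b (j+1) ≤ b j + 1 := by
    intro j
    have hx : i + j*d = e * (b j) + (i + j*d) % e := (Nat.div_add_mod _ e).symm
    have hmod : (i + j*d) % e < e := Nat.mod_lt _ he0
    have hexp : (b j + 2) * e = e * (b j) + e + e := by ring
    have hlt : i + (j+1)*d < (b j + 2) * e := by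
      have h2 : (j+1)*d = j*d + d := by ring
      omega
    have h5 := (Nat.div_lt_iff_lt_mul he0).mpr hlt
    have hb2 : b (j+1) = (i + (j+1)*d)/e := rfl
    omega
  have b3 : ∀ j, b j + 1 ≤ b (j+3) := by
    intro j
    have h1 : i + j*d + e ≤ i + (j+3)*d := by
      have h2 : (j+3)*d = j*d + 3*d := by ring
      omega
    have h3 : (i + j*d + e) / e = b j + 1 := Nat.add_div_right _ he0
    have h4 := Nat.div_le_div_right (c := e) h1
    rw [h3] at h4
    exact h4
  have windowF : ∀ j, inC (b j) = false → inC (b (j+1)) = false →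
      ∀ t, t < d → sierpinski (i + j*d + t) = false := by
    intro j h1 h2 t ht
    rw [sierpinski_eq_inC]
    cases hsx : inC (i + j*d + t) with
    | false => rfl
    | true =>
      exfalso
      have hd1 : b j ≤ (i + j*d + t)/e := Nat.div_le_div_right (by omega)
      have hd2 : (i + j*d + t)/e ≤ b (j+1) := by
        apply Nat.div_le_div_right
        have : (j+1)*d = j*d + d := by ring
        omega
      have hbs := bstep j
      have hdd := inC_divPow r _ hsx
      rw [← he] at hdd
      have : (i + j*d + t)/e = b j ∨ (i + j*d + t)/e = b (j+1) := by omega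
      rcases this with h | h <;> rw [h] at hdd
      · rw [h1] at hdd; exact Bool.false_ne_true hdd
      · rw [h2] at hdd; exact Bool.false_ne_true hdd
  by_cases hS : b 0 + 6 ≤ b 11
  · -- transition case
    have cross : ∀ v, b 0 ≤ v → v + 1 ≤ b 11 →
        ∃ j, j < 11 ∧ b j = v ∧ b (j+1) = v + 1 := by
      intro v h0 h1
      have key : ∀ n, n ≤ 11 → b n ≤ v ∨ ∃ j, j < 11 ∧ b j = v ∧ b (j+1) = v+1 := by
        intro n
        induction n with
        | zero => intro _; exact Or.inl h0
        | succ n ih =>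
          intro hn
          rcases ih (by omega) with hbn | hj
          · by_cases hb1 : b (n+1) ≤ v
            · exact Or.inl hb1
            · right
              have hbs := bstep n
              exact ⟨n, by omega, by omega, by omega⟩
          · exact Or.inr hj
      rcases key 11 le_rfl with h | h
      · omega
      · exact h
    obtain ⟨v1, v2, hv1w, hv12, hv2b, f1, f2, f3, f4⟩ := twoFree (b 0)
    obtain ⟨j1, hj1, hbj1, hbj1'⟩ := cross v1 hv1w (by omega)
    obtain ⟨j2, hj2, hbj2, hbj2'⟩ := cross v2 (by omega) (by omega)
    refine ⟨j1, j2, hj1, hj2, ?_, ?_, ?_⟩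
    · intro hcon; rw [hcon, hbj2] at hbj1; omega
    · exact windowF j1 (by rw [hbj1]; exact f1) (by rw [hbj1']; exact f2)
    · exact windowF j2 (by rw [hbj2]; exact f3) (by rw [hbj2']; exact f4)
  · -- dwell case
    have hS5 : b 11 ≤ b 0 + 5 := by
      have := mono 0 11 (by omega)
      omega
    have tele : ∀ n, (∑ j ∈ Finset.range n, (b (j+1) - b j)) = b n - b 0 := by
      intro n
      induction n with
      | zero => simp
      | succ n ih =>
        rw [Finset.sum_range_succ, ih]
        have h1 := mono 0 n (by omega)
        have h2 := mono n (n+1) (by omega)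
        omega
    set Dw := (Finset.range 11).filter (fun j => b (j+1) = b j) with hDw
    set Nd := (Finset.range 11).filter (fun j => ¬ b (j+1) = b j) with hNd
    have hcard : 6 ≤ Dw.card := by
      have hnd : Nd.card ≤ 5 := by
        have step1 : Nd.card ≤ ∑ j ∈ Nd, (b (j+1) - b j) := by
          rw [Finset.card_eq_sum_ones]
          apply Finset.sum_le_sum
          intro j hj
          rw [hNd, Finset.mem_filter] at hj
          have := mono j (j+1) (by omega)
          omega
        have step2 : ∑ j ∈ Nd, (b (j+1) - b j)
            ≤ ∑ j ∈ Finset.range 11, (b (j+1) - b j) := by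
          rw [hNd]
          exact Finset.sum_le_sum_of_subset (Finset.filter_subset _ _)
        rw [tele 11] at step2
        have := mono 0 11 (by omega)
        omega
      have hsum := Finset.card_filter_add_card_filter_not
        (s := Finset.range 11) (p := fun j => b (j+1) = b j)
      beta_reduce at hsum
      rw [← hDw, ← hNd] at hsum
      simp only [Finset.card_range] at hsum
      omega
    set DF := Dw.filter (fun j => ¬ inC (b j) = true) with hDF
    set DC := Dw.filter (fun j => inC (b j) = true) with hDC
    have hsplit : DC.card + DF.card = Dw.card := by
      have h := Finset.card_filter_add_card_filter_not (s := Dw) (p := fun j => inC (b j) = true)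
      beta_reduce at h
      rw [← hDC, ← hDF] at h
      exact h
    by_cases hDF2 : 2 ≤ DF.card
    · have h1lt : 1 < DF.card := by omega
      obtain ⟨j1, hj1, j2, hj2, hne⟩ := Finset.one_lt_card.mp h1lt
      simp only [hDF, hDw, Finset.mem_filter, Finset.mem_range] at hj1 hj2
      obtain ⟨⟨hj1r, hj1d⟩, hj1c⟩ := hj1
      obtain ⟨⟨hj2r, hj2d⟩, hj2c⟩ := hj2
      rw [Bool.not_eq_true] at hj1c hj2c
      exact ⟨j1, j2, hj1r, hj2r, hne,
        windowF j1 hj1c (by rw [hj1d]; exact hj1c),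
        windowF j2 hj2c (by rw [hj2d]; exact hj2c)⟩
    · exfalso
      have hDC5 : 5 ≤ DC.card := by omega
      set Im := DC.image b with hIm
      by_cases hIm3 : 3 ≤ Im.card
      · have h2lt : 2 < Im.card := by omega
        obtain ⟨c1, c2, c3, hc1, hc2, hc3, h12, h13, h23⟩ := Finset.two_lt_card_iff.mp h2lt
        have hfact : ∀ c ∈ Im, inC c = true ∧ b 0 ≤ c ∧ c ≤ b 0 + 5 := by
          intro c hc
          simp only [hIm, Finset.mem_image] at hc
          obtain ⟨j, hjDC, rfl⟩ := hc
          simp only [hDC, hDw, Finset.mem_filter, Finset.mem_range] at hjDC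
          obtain ⟨⟨hjr, _⟩, hjc⟩ := hjDC
          refine ⟨hjc, mono 0 j (by omega), ?_⟩
          have := mono j 11 (by omega)
          omega
        obtain ⟨g1, b1, b1'⟩ := hfact c1 hc1
        obtain ⟨g2, b2, b2'⟩ := hfact c2 hc2
        obtain ⟨g3, b3', b3''⟩ := hfact c3 hc3
        exact not_three_in_window (b 0) c1 c2 c3 h12 h13 h23 b1 b1' b2 b2' b3' b3'' g1 g2 g3
      · have hmaps : ∀ j ∈ DC, b j ∈ Im := fun j hj => Finset.mem_image_of_mem b hj
        have hmul : Im.card * 2 < DC.card := by omega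
        obtain ⟨y, _, hy2⟩ := Finset.exists_lt_card_fiber_of_mul_lt_card_of_maps_to hmaps hmul
        obtain ⟨j1, j2, j3, hj1, hj2, hj3, h12, h13, h23⟩ := Finset.two_lt_card_iff.mp hy2
        have hfact : ∀ j ∈ DC.filter (fun x => b x = y), j < 11 ∧ b (j+1) = b j ∧ b j = y := by
          intro j hj
          simp only [hDC, hDw, Finset.mem_filter, Finset.mem_range] at hj
          exact ⟨hj.1.1.1, hj.1.1.2, hj.2⟩
        obtain ⟨r1, d1, e1⟩ := hfact j1 hj1
        obtain ⟨r2, d2, e2⟩ := hfact j2 hj2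
        obtain ⟨r3, d3, e3⟩ := hfact j3 hj3
        -- derive contradiction: three distinct dwell indices at the same value y
        have key3 : ∀ ja jb, ja + 2 ≤ jb → jb < 11 → b ja = y → b jb = y → b (jb+1) = b jb → False := by
          intro ja jb hab hb hya hyb hdb
          have h1 := b3 ja
          have h2 := mono (ja+3) (jb+1) (by omega)
          omega
        rcases Nat.lt_trichotomy j1 j2 with h | h | h
        · rcases Nat.lt_trichotomy j2 j3 with h' | h' | h'
          · exact key3 j1 j3 (by omega) r3 e1 e3 d3
          · omega
          · rcases Nat.lt_trichotomy j1 j3 with h'' | h'' | h''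
            · exact key3 j1 j2 (by omega) r2 e1 e2 d2
            · omega
            · exact key3 j3 j2 (by omega) r2 e3 e2 d2
        · omega
        · rcases Nat.lt_trichotomy j1 j3 with h' | h' | h'
          · exact key3 j2 j3 (by omega) r3 e2 e3 d3
          · omega
          · rcases Nat.lt_trichotomy j2 j3 with h'' | h'' | h''
            · exact key3 j2 j1 (by omega) r1 e2 e1 d1
            · omega
            · exact key3 j3 j1 (by omega) r1 e3 e1 d1

lemma len_flatten {d : ℕ} : ∀ us : List (List Bool), (∀ u ∈ us, u.length = d) →
    us.flatten.length = us.length * d := by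
  intro us
  induction us with
  | nil => simp
  | cons u tl ih =>
    intro h
    simp only [List.flatten_cons, List.length_append, List.length_cons]
    rw [h u (by simp), ih (fun u hu => h u (by simp [hu]))]
    ring

lemma window_eq {d : ℕ} : ∀ (us : List (List Bool)) (o : ℕ),
    (∀ u ∈ us, u.length = d) →
    us.flatten = (List.range (us.length * d)).map (fun t => sierpinski (o + t)) →
    ∀ j (hj : j < us.length),
      us.get ⟨j, hj⟩ = (List.range d).map (fun t => sierpinski (o + (j*d + t))) := by
  intro us
  induction us with
  | nil => intro o _ _ j hj; exact absurd hj (by simp)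
  | cons u tl ih =>
    intro o hlens hflat j hj
    have hu : u.length = d := hlens u (by simp)
    have hsplit : (List.range ((u :: tl).length * d)).map (fun t => sierpinski (o + t)) =
        (List.range d).map (fun t => sierpinski (o + t)) ++
        (List.range (tl.length * d)).map (fun t => sierpinski (o + d + t)) := by
      have h1 : (u :: tl).length * d = d + tl.length * d := by simp [List.length_cons]; ring
      rw [h1, List.range_add, List.map_append, List.map_map]
      congr 1
      apply List.map_congr_left
      intro a _
      simp only [Function.comp_apply]
      congr 1
      omega
    rw [List.flatten_cons, hsplit] at hflat
    have hinj := List.append_inj hflat (by simp [hu])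
    obtain ⟨hhead, htail⟩ := hinj
    cases j with
    | zero =>
      simp only [List.get]
      rw [hhead]
      apply List.map_congr_left
      intro a _
      congr 1
      omega
    | succ j =>
      simp only [List.get]
      have htail' : tl.flatten = (List.range (tl.length * d)).map (fun t => sierpinski ((o + d) + t)) := htail
      have := ih (o + d) (fun u hu => hlens u (by simp [hu])) htail' j (by simpa using hj)
      rw [this]
      apply List.map_congr_left
      intro a _
      congr 1
      ring

/-- The Sierpiński word does not contain abelian `11`-antipowers. -/
theorem sierpinski_no_abelian_11_antipower :
    ¬ ∃ v : List Bool, IsFactor sierpinski v ∧ IsAbelianAntipower 11 v := by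
  rintro ⟨v, ⟨i, hv⟩, us, hlen, hflat, ⟨d, hd0, hlens⟩, hpw⟩
  obtain ⟨j1, j2, hj1, hj2, hne, F1, F2⟩ := two_false_windows i d hd0
  have hvlen : v.length = 11 * d := by
    rw [← hflat, len_flatten us hlens, hlen]
  have hflat' : us.flatten = (List.range (us.length * d)).map (fun t => sierpinski (i + t)) := by
    rw [hflat, hlen, ← hvlen]
    exact hv
  have hw := window_eq us i hlens hflat'
  have hget : ∀ j (hj : j < us.length), (∀ t, t < d → sierpinski (i + j*d + t) = false) →
      us.get ⟨j, hj⟩ = (List.range d).map (fun _ => false) := by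
    intro j hj hF
    rw [hw j hj]
    apply List.map_congr_left
    intro a ha
    rw [List.mem_range] at ha
    rw [← Nat.add_assoc]
    exact hF a ha
  have hj1' : j1 < us.length := by omega
  have hj2' : j2 < us.length := by omega
  have heq : us.get ⟨j1, hj1'⟩ = us.get ⟨j2, hj2'⟩ := by
    rw [hget j1 hj1' F1, hget j2 hj2' F2]
  have hpw' := List.pairwise_iff_get.mp hpw
  rcases Nat.lt_or_ge j1 j2 with h | h
  · have := hpw' ⟨j1, hj1'⟩ ⟨j2, hj2'⟩ (by exact h)
    exact this (by rw [heq])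
  · have hlt : j2 < j1 := by omega
    have := hpw' ⟨j2, hj2'⟩ ⟨j1, hj1'⟩ (by exact hlt)
    exact this (by rw [heq])
end

section
/- The abelian complexity a(n) of the Sierpiński word s satisfies a(n) = Θ(n^{log_3 2}): there exist constants c_1, c_2 > 0 such that for every n ≥ 1, c_1 · n^{log_3 2} ≤ a(n) ≤ c_2 · n^{log_3 2}. -/
lemma sa_len (n : ℕ) : (sierpinskiApprox n).length = 3 ^ n := by
  induction n with
  | zero => rfl
  | succ n ih => simp [sierpinskiApprox, ih, pow_succ]; ring

lemma sa_prefix (n : ℕ) : sierpinskiApprox n <+: sierpinskiApprox (n + 1) :=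
  ⟨List.replicate (3 ^ n) false ++ sierpinskiApprox n, by simp [sierpinskiApprox]⟩

lemma sa_getD_stable {n m : ℕ} (h : n ≤ m) {i : ℕ} (hi : i < 3 ^ n) :
    (sierpinskiApprox m).getD i false = (sierpinskiApprox n).getD i false := by
  induction m, h using Nat.le_induction with
  | base => rfl
  | succ m hm ih =>
    have hi2 : i < (sierpinskiApprox m).length := by
      rw [sa_len]; exact hi.trans_le (Nat.pow_le_pow_right (by norm_num) hm)
    have hi3 : i < (sierpinskiApprox (m+1)).length := by
      rw [sa_len]; exact hi.trans_le (Nat.pow_le_pow_right (by norm_num) (by omega))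
    rw [List.getD_eq_getElem _ _ hi3, ← (sa_prefix m).getElem hi2,
        ← List.getD_eq_getElem _ _ hi2, ih]

lemma s_eq_getD {n i : ℕ} (hi : i < 3 ^ n) :
    sierpinski i = (sierpinskiApprox n).getD i false := by
  unfold sierpinski
  have hii : i < 3 ^ (i + 1) := (Nat.lt_pow_self (by norm_num) : i < 3 ^ i).trans
    (Nat.pow_lt_pow_right (by norm_num) (by omega))
  rcases le_total n (i + 1) with h | h
  · exact sa_getD_stable h hi
  · exact (sa_getD_stable h hii).symm

lemma s_top {d k x : ℕ} (hd : d < 3) (hx : x < 3 ^ k) :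
    sierpinski (d * 3 ^ k + x) = (sierpinski d && sierpinski x) := by
  have hlen : (sierpinskiApprox k).length = 3 ^ k := sa_len k
  have hx' : sierpinski x = (sierpinskiApprox k).getD x false := s_eq_getD hx
  have hrep : (List.replicate (3 ^ k) false).getD x false = false := by
    rw [List.getD_eq_getElem _ _ (by simpa using hx)]; simp
  have hlen2 : (sierpinskiApprox k ++ List.replicate (3 ^ k) false).length = 2 * 3 ^ k := by
    simp [hlen]; ring
  interval_cases d
  · rw [show (0 * 3 ^ k + x) = x by ring, show sierpinski 0 = true from by decide,
      Bool.true_and]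
  · have hb : 1 * 3 ^ k + x < 3 ^ (k+1) := by rw [pow_succ]; nlinarith
    rw [s_eq_getD hb, show sierpinski 1 = false from by decide, Bool.false_and]
    show ((sierpinskiApprox k ++ List.replicate (3 ^ k) false) ++ sierpinskiApprox k).getD _ _ = _
    rw [List.getD_append _ _ _ _ (by rw [hlen2]; omega),
        List.getD_append_right _ _ _ _ (by rw [hlen]; omega), hlen]
    rw [show 1 * 3 ^ k + x - 3 ^ k = x by omega]
    exact hrep
  · have hb : 2 * 3 ^ k + x < 3 ^ (k+1) := by rw [pow_succ]; nlinarith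
    rw [s_eq_getD hb, show sierpinski 2 = true from by decide, Bool.true_and]
    show ((sierpinskiApprox k ++ List.replicate (3 ^ k) false) ++ sierpinskiApprox k).getD _ _ = _
    rw [List.getD_append_right _ _ _ _ (by rw [hlen2]; omega), hlen2,
        show 2 * 3 ^ k + x - 2 * 3 ^ k = x by omega]
    exact hx'.symm

lemma s_mul_aux (n : ℕ) : ∀ q, q < 3 ^ n → ∀ m r, r < 3 ^ m →
    sierpinski (q * 3 ^ m + r) = (sierpinski q && sierpinski r) := by
  induction n with
  | zero =>
    intro q hq m r hr
    interval_cases q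
    simp [show sierpinski 0 = true from by decide]
  | succ n ih =>
    intro q hq m r hr
    set d := q / 3 ^ n with hd
    set q' := q % 3 ^ n with hq'
    have hdq : q = d * 3 ^ n + q' := by rw [hd, hq', Nat.mul_comm, Nat.div_add_mod]
    have hd3 : d < 3 := by
      rw [hd]; apply Nat.div_lt_of_lt_mul; rw [pow_succ] at hq; omega
    have hq'3 : q' < 3 ^ n := Nat.mod_lt _ (by positivity)
    have key : q * 3 ^ m + r = d * 3 ^ (n + m) + (q' * 3 ^ m + r) := by
      rw [hdq, pow_add]; ring
    have hlt : q' * 3 ^ m + r < 3 ^ (n + m) := by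
      rw [pow_add]
      calc q' * 3 ^ m + r < (q' + 1) * 3 ^ m := by
            have := hr; nlinarith
        _ ≤ 3 ^ n * 3 ^ m := Nat.mul_le_mul hq'3 le_rfl
    rw [key, s_top hd3 hlt, ih q' hq'3 m r hr, hdq, s_top hd3 hq'3, Bool.and_assoc]

lemma s_mul (q m r : ℕ) (hr : r < 3 ^ m) :
    sierpinski (q * 3 ^ m + r) = (sierpinski q && sierpinski r) :=
  s_mul_aux q q (Nat.lt_pow_self (by norm_num) : q < 3 ^ q) m r hr

/-- number of `true`s among the first `n` letters -/
def scnt (n : ℕ) : ℕ := ((List.range n).map sierpinski).count true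

/-- number of `true`s in the window `[i, i+n)` -/
def swin (i n : ℕ) : ℕ := ((List.range n).map (fun j => sierpinski (i + j))).count true

lemma scnt_add (i n : ℕ) : scnt (i + n) = scnt i + swin i n := by
  unfold scnt swin
  rw [List.range_add, List.map_append, List.count_append, List.map_map]
  rfl

lemma scnt_mono {a b : ℕ} (h : a ≤ b) : scnt a ≤ scnt b := by
  have := scnt_add a (b - a)
  rw [show a + (b - a) = b by omega] at this
  omega

lemma swin_le_length (i n : ℕ) : swin i n ≤ n := by
  have h : ((List.range n).map (fun j => sierpinski (i + j))).count true ≤ _ := List.count_le_length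
  simpa [swin] using h

lemma scnt_succ_le (i : ℕ) : scnt (i + 1) ≤ scnt i + 1 := by
  have h1 := scnt_add i 1
  have h2 := swin_le_length i 1
  omega

lemma swin_block (q m : ℕ) : swin (q * 3 ^ m) (3 ^ m) = if sierpinski q then scnt (3 ^ m) else 0 := by
  unfold swin
  have hmap : (List.range (3 ^ m)).map (fun j => sierpinski (q * 3 ^ m + j)) =
      (List.range (3 ^ m)).map (fun j => sierpinski q && sierpinski j) := by
    apply List.map_congr_left
    intro a ha
    exact s_mul q m a (List.mem_range.mp ha)
  rw [hmap]
  cases hq : sierpinski q with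
  | false => simp [List.count_replicate]
  | true => simp [scnt]

lemma scnt_block (q m : ℕ) :
    scnt ((q + 1) * 3 ^ m) = scnt (q * 3 ^ m) + if sierpinski q then scnt (3 ^ m) else 0 := by
  rw [show (q + 1) * 3 ^ m = q * 3 ^ m + 3 ^ m by ring, scnt_add, swin_block]

lemma scnt_pow (m : ℕ) : scnt (3 ^ m) = 2 ^ m := by
  induction m with
  | zero => decide
  | succ m ih =>
    have h1 := scnt_block 0 m
    have h2 := scnt_block 1 m
    have h3 := scnt_block 2 m
    rw [show sierpinski 0 = true from by decide] at h1
    rw [show sierpinski 1 = false from by decide] at h2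
    rw [show sierpinski 2 = true from by decide] at h3
    simp only [if_true, if_false] at h1 h2 h3
    norm_num at h1 h2 h3
    have h0 : scnt 0 = 0 := rfl
    have e : scnt (3 ^ (m + 1)) = scnt (3 * 3 ^ m) := by rw [pow_succ, Nat.mul_comm]
    rw [e]
    have e2 : (2:ℕ) ^ (m + 1) = 2 ^ m + 2 ^ m := by ring
    omega

lemma scnt_block_le (q m : ℕ) :
    scnt ((q + 1) * 3 ^ m) ≤ scnt (q * 3 ^ m) + 2 ^ m := by
  rw [scnt_block, scnt_pow]
  cases h : sierpinski q <;> simp [h]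

lemma swin_le (i n m : ℕ) (h : n ≤ 3 ^ m) : swin i n ≤ 2 ^ (m + 1) := by
  set q := i / 3 ^ m with hq
  have hmod := Nat.div_add_mod i (3 ^ m)
  have hmlt : i % 3 ^ m < 3 ^ m := Nat.mod_lt _ (by positivity)
  have h1 : q * 3 ^ m ≤ i := by rw [hq, Nat.mul_comm]; omega
  have h2 : i + n ≤ (q + 2) * 3 ^ m := by
    have e : (q + 2) * 3 ^ m = 3 ^ m * (i / 3 ^ m) + 3 ^ m + 3 ^ m := by rw [hq]; ring
    omega
  have hb1 := scnt_block_le q m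
  have hb2 := scnt_block_le (q + 1) m
  rw [show (q + 1 + 1) = q + 2 by ring] at hb2
  have hm1 : scnt (q * 3 ^ m) ≤ scnt i := scnt_mono h1
  have hm2 : scnt (i + n) ≤ scnt ((q + 2) * 3 ^ m) := scnt_mono h2
  have hadd := scnt_add i n
  have e2 : (2 : ℕ) ^ (m + 1) = 2 ^ m + 2 ^ m := by ring
  omega

lemma swin_pow_zero (n m : ℕ) (h : n ≤ 3 ^ m) : swin (3 ^ m) n = 0 := by
  unfold swin
  rw [List.count_eq_zero]
  intro hmem
  rw [List.mem_map] at hmem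
  obtain ⟨j, hj, hval⟩ := hmem
  rw [List.mem_range] at hj
  rw [show (3 : ℕ) ^ m + j = 1 * 3 ^ m + j by ring, s_mul 1 m j (by omega),
      show sierpinski 1 = false from by decide] at hval
  simp at hval

lemma swin_zero_eq (n : ℕ) : swin 0 n = scnt n := by
  have := scnt_add 0 n
  simpa [show scnt 0 = 0 from rfl] using this.symm

lemma swin_step (i n : ℕ) : swin i n ≤ swin (i + 1) n + 1 ∧ swin (i + 1) n ≤ swin i n + 1 := by
  have h1 := scnt_add i n
  have h2 := scnt_add (i + 1) n
  rw [show i + 1 + n = (i + n) + 1 by ring] at h2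
  have h3 := scnt_succ_le i
  have h4 := scnt_succ_le (i + n)
  have h5 : scnt i ≤ scnt (i + 1) := scnt_mono (by omega)
  have h6 : scnt (i + n) ≤ scnt (i + n + 1) := scnt_mono (by omega)
  omega

lemma exists_swin (n c : ℕ) (h : c ≤ scnt n) : ∃ i, swin i n = c := by
  have hex : ∃ i, swin i n ≤ c := by
    refine ⟨3 ^ n, ?_⟩
    rw [swin_pow_zero n n (le_of_lt (Nat.lt_pow_self (by norm_num) : n < 3 ^ n))]
    omega
  classical
  obtain ⟨i₀, hspec, hmin⟩ : ∃ i, swin i n ≤ c ∧ ∀ j < i, ¬ swin j n ≤ c :=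
    ⟨Nat.find hex, Nat.find_spec hex, fun j hj => Nat.find_min hex hj⟩
  cases i₀ with
  | zero =>
    rw [swin_zero_eq] at hspec
    refine ⟨0, ?_⟩
    rw [swin_zero_eq]
    omega
  | succ j =>
    have hj : ¬ swin j n ≤ c := hmin j (by omega)
    have := swin_step j n
    exact ⟨j + 1, by omega⟩

/-- The abelian complexity of an infinite word `w` : the number of distinct
Parikh vectors of factors of `w` of length `n`. -/
noncomputable def abelianComplexity {A : Type*} [DecidableEq A] (w : ℕ → A) (n : ℕ) : ℕ :=
  Set.ncard {p : A → ℕ | ∃ i : ℕ, p = parikh ((List.range n).map (fun j => w (i + j)))}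

lemma parikh_cons (h : Bool) (t : List Bool) (a : Bool) :
    parikh (h :: t) a = parikh t a + (if h = a then 1 else 0) := by
  simp only [parikh, List.count_cons]
  by_cases hha : h = a <;> simp [hha]

lemma parikh_add (u : List Bool) : parikh u false + parikh u true = u.length := by
  induction u with
  | nil => rfl
  | cons h t ih =>
    rw [parikh_cons, parikh_cons, List.length_cons]
    cases h <;> simp <;> omega

lemma parikh_window (i n : ℕ) :
    parikh ((List.range n).map (fun j => sierpinski (i + j))) =
      fun b => if b then swin i n else n - swin i n := by
  funext b
  have htrue : parikh ((List.range n).map (fun j => sierpinski (i + j))) true = swin i n := by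
    simp [parikh, swin]
  cases b
  · have h := parikh_add ((List.range n).map (fun j => sierpinski (i + j)))
    simp only [List.length_map, List.length_range] at h
    simp only [if_neg Bool.false_ne_true]
    exact Nat.eq_sub_of_add_eq (htrue ▸ h)
  · simpa using htrue

lemma abelian_eq (n : ℕ) :
    abelianComplexity sierpinski n = Set.ncard {c : ℕ | ∃ i, swin i n = c} := by
  unfold abelianComplexity
  have himg : {p : Bool → ℕ | ∃ i : ℕ, p = parikh ((List.range n).map (fun j => sierpinski (i + j)))}
      = (fun c => fun b : Bool => if b then c else n - c) '' {c : ℕ | ∃ i, swin i n = c} := by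
    ext p
    constructor
    · rintro ⟨i, rfl⟩
      exact ⟨swin i n, ⟨i, rfl⟩, (parikh_window i n).symm⟩
    · rintro ⟨c, ⟨i, rfl⟩, rfl⟩
      exact ⟨i, by simpa using (parikh_window i n).symm⟩
  rw [himg]
  apply Set.ncard_image_of_injective
  intro a b hab
  have := congrFun hab true
  simpa using this

lemma abelian_bounds (n : ℕ) (hn : 1 ≤ n) :
    2 ^ Nat.log 3 n + 1 ≤ abelianComplexity sierpinski n ∧
    abelianComplexity sierpinski n ≤ 2 ^ (Nat.log 3 n + 2) + 1 := by
  set k := Nat.log 3 n with hk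
  have hk1 : 3 ^ k ≤ n := Nat.pow_log_le_self 3 (by omega)
  have hk2 : n < 3 ^ (k + 1) := Nat.lt_pow_succ_log_self (by norm_num) n
  set T : Set ℕ := {c | ∃ i, swin i n = c} with hT
  have hsub : T ⊆ Set.Iic (2 ^ (k + 2)) := by
    rintro c ⟨i, rfl⟩
    exact swin_le i n (k + 1) (le_of_lt hk2)
  have hfin : T.Finite := (Set.finite_Iic _).subset hsub
  have hlow : Set.Iic (scnt n) ⊆ T := fun c hc => exists_swin n c hc
  have hcard : ∀ b : ℕ, (Set.Iic b).ncard = b + 1 := by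
    intro b
    rw [← Finset.coe_Iic, Set.ncard_coe_finset, Nat.card_Iic]
  constructor
  · have hscnt : 2 ^ k ≤ scnt n := by
      have h := scnt_mono hk1
      rw [scnt_pow] at h
      exact h
    have hle := Set.ncard_le_ncard hlow hfin
    rw [hcard] at hle
    rw [abelian_eq, ← hT]
    omega
  · have hle := Set.ncard_le_ncard hsub (Set.finite_Iic _)
    rw [hcard] at hle
    rw [abelian_eq, ← hT]
    omega

/-- The abelian complexity `a(n)` of the Sierpiński word satisfies
`a(n) = Θ(n^{log_3 2})`. -/
theorem sierpinski_abelian_complexity_theta :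
    ∃ c₁ c₂ : ℝ, 0 < c₁ ∧ 0 < c₂ ∧ ∀ n : ℕ, 1 ≤ n →
      c₁ * (n : ℝ) ^ (Real.logb 3 2) ≤ (abelianComplexity sierpinski n : ℝ) ∧
      (abelianComplexity sierpinski n : ℝ) ≤ c₂ * (n : ℝ) ^ (Real.logb 3 2) := by
  refine ⟨1/2, 5, by norm_num, by norm_num, fun n hn => ?_⟩
  obtain ⟨hA1, hA2⟩ := abelian_bounds n hn
  set k := Nat.log 3 n with hk
  set α := Real.logb 3 2 with hα
  have hαpos : 0 < α := Real.logb_pos (by norm_num) (by norm_num)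
  have h3α : (3:ℝ) ^ α = 2 := Real.rpow_logb (by norm_num) (by norm_num) (by norm_num)
  have hpow : ∀ j : ℕ, ((3:ℝ) ^ j) ^ α = 2 ^ j := by
    intro j
    rw [← Real.rpow_natCast 3 j, ← Real.rpow_mul (by norm_num), mul_comm,
        Real.rpow_mul (by norm_num), h3α, Real.rpow_natCast]
  have hk1 : 3 ^ k ≤ n := Nat.pow_log_le_self 3 (by omega)
  have hk2 : n < 3 ^ (k + 1) := Nat.lt_pow_succ_log_self (by norm_num) n
  have hcast1 : ((3:ℝ) ^ k) ≤ (n:ℝ) := by exact_mod_cast hk1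
  have hcast2 : (n:ℝ) ≤ (3:ℝ) ^ (k + 1) := by exact_mod_cast hk2.le
  have hna : (n:ℝ) ^ α ≤ 2 ^ (k + 1) := by
    rw [← hpow (k + 1)]
    exact Real.rpow_le_rpow (by positivity) hcast2 hαpos.le
  have hna2 : (2:ℝ) ^ k ≤ (n:ℝ) ^ α := by
    rw [← hpow k]
    exact Real.rpow_le_rpow (by positivity) hcast1 hαpos.le
  have hAc1 : (2:ℝ) ^ k + 1 ≤ (abelianComplexity sierpinski n : ℝ) := by exact_mod_cast hA1
  have hAc2 : (abelianComplexity sierpinski n : ℝ) ≤ 2 ^ (k + 2) + 1 := by exact_mod_cast hA2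
  have h2k : (1:ℝ) ≤ 2 ^ k := by exact_mod_cast Nat.one_le_two_pow
  constructor
  · have h1 : (1:ℝ)/2 * (n:ℝ) ^ α ≤ 1/2 * 2 ^ (k + 1) := by linarith
    have h2 : (1:ℝ)/2 * 2 ^ (k + 1) = 2 ^ k := by ring
    linarith
  · have h3 : (2:ℝ) ^ (k + 2) = 4 * 2 ^ k := by ring
    nlinarith [hna2]
end

section
/- For every n ≥ 1, the number A(n) of occurrences of the letter a in the prefix of the Sierpiński word s of length n satisfies (n/2)^{log_3 2} ≤ A(n) ≤ n^{log_3 2}. -/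
/-! ### Auxiliary combinatorial lemmas -/

/-- `A(n)`, the number of `a`s in the length-`n` prefix. -/
def SA (n : ℕ) : ℕ := ((List.range n).map (fun j => sierpinski j)).count true

lemma length_sa (k : ℕ) : (sierpinskiApprox k).length = 3 ^ k := by
  induction k with
  | zero => rfl
  | succ k ih => simp [sierpinskiApprox, ih, pow_succ]; ring

lemma count_sa (k : ℕ) : (sierpinskiApprox k).count true = 2 ^ k := by
  induction k with
  | zero => rfl
  | succ k ih => simp [sierpinskiApprox, List.count_append, ih, List.count_replicate, pow_succ]; ring

lemma sa_succ (k : ℕ) : sierpinskiApprox (k + 1) =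
    sierpinskiApprox k ++ List.replicate (3 ^ k) false ++ sierpinskiApprox k := rfl

def getE (k i : ℕ) : Bool := (sierpinskiApprox k).getD i false

lemma getE_succ {k i : ℕ} (h : i < 3 ^ k) : getE (k + 1) i = getE k i := by
  unfold getE
  rw [sa_succ]
  have h1 : i < (sierpinskiApprox k ++ List.replicate (3 ^ k) false).length := by
    simp only [List.length_append, List.length_replicate, length_sa]; omega
  have h2 : i < (sierpinskiApprox k).length := by rw [length_sa]; exact h
  rw [List.getD_append _ _ _ _ h1, List.getD_append _ _ _ _ h2]

lemma getE_mono {k i : ℕ} (h : i < 3 ^ k) : ∀ l, k ≤ l → getE l i = getE k i := by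
  intro l hl
  induction l, hl using Nat.le_induction with
  | base => rfl
  | succ l hl ih =>
      rw [getE_succ (lt_of_lt_of_le h (Nat.pow_le_pow_right (by norm_num) hl)), ih]

lemma sierpinski_eq_getE {k i : ℕ} (h : i < 3 ^ k) : sierpinski i = getE k i := by
  have hi : i < 3 ^ (i + 1) :=
    lt_of_lt_of_le (Nat.lt_pow_self (by norm_num : 1 < 3))
      (Nat.pow_le_pow_right (by norm_num) (Nat.le_succ i))
  show getE (i + 1) i = getE k i
  rcases le_total k (i + 1) with hk | hk
  · rw [getE_mono h _ hk]
  · rw [getE_mono hi _ hk]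

lemma sierpinski_mid {k i : ℕ} (h : i < 3 ^ k) : sierpinski (3 ^ k + i) = false := by
  have h2 : 3 ^ k + i < 3 ^ (k + 1) := by rw [pow_succ]; omega
  rw [sierpinski_eq_getE h2]
  unfold getE
  rw [sa_succ]
  have h1 : 3 ^ k + i < (sierpinskiApprox k ++ List.replicate (3 ^ k) false).length := by
    simp only [List.length_append, List.length_replicate, length_sa]; omega
  have h2' : (sierpinskiApprox k).length ≤ 3 ^ k + i := by rw [length_sa]; omega
  rw [List.getD_append _ _ _ _ h1, List.getD_append_right _ _ _ _ h2']
  simp [length_sa, h]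

lemma sierpinski_right {k i : ℕ} (h : i < 3 ^ k) :
    sierpinski (2 * 3 ^ k + i) = sierpinski i := by
  have h2 : 2 * 3 ^ k + i < 3 ^ (k + 1) := by rw [pow_succ]; omega
  rw [sierpinski_eq_getE h2, sierpinski_eq_getE h]
  unfold getE
  rw [sa_succ]
  have h1 : (sierpinskiApprox k ++ List.replicate (3 ^ k) false).length ≤ 2 * 3 ^ k + i := by
    simp only [List.length_append, List.length_replicate, length_sa]; omega
  rw [List.getD_append_right _ _ _ _ h1]
  congr 1
  simp only [List.length_append, List.length_replicate, length_sa]; omega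

lemma SA_add (a b : ℕ) :
    SA (a + b) = SA a + ((List.range b).map (fun i => sierpinski (a + i))).count true := by
  unfold SA
  rw [List.range_add, List.map_append, List.count_append, List.map_map]
  rfl

lemma SA_pow (k : ℕ) : SA (3 ^ k) = 2 ^ k := by
  unfold SA
  have h : (List.range (3 ^ k)).map (fun j => sierpinski j) = sierpinskiApprox k := by
    apply List.ext_getElem
    · simp [length_sa]
    · intro i h1 h2
      simp only [List.getElem_map, List.getElem_range]
      have hi : i < 3 ^ k := by simpa [length_sa] using h2
      rw [sierpinski_eq_getE hi]
      unfold getE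
      rw [List.getD_eq_getElem _ _ h2]
  rw [h, count_sa]

lemma SA_mid {k j : ℕ} (h : j ≤ 3 ^ k) : SA (3 ^ k + j) = 2 ^ k := by
  rw [SA_add, SA_pow]
  have h0 : ((List.range j).map (fun i => sierpinski (3 ^ k + i))).count true = 0 := by
    apply List.count_eq_zero.mpr
    simp only [List.mem_map, List.mem_range]
    rintro ⟨i, hi, he⟩
    rw [sierpinski_mid (lt_of_lt_of_le hi h)] at he
    exact Bool.false_ne_true he
  omega

lemma SA_right {k j : ℕ} (h : j ≤ 3 ^ k) : SA (2 * 3 ^ k + j) = 2 ^ k + SA j := by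
  rw [SA_add]
  have h1 : SA (2 * 3 ^ k) = 2 ^ k := by
    have h' := SA_mid (k := k) (le_refl (3 ^ k))
    rwa [show 3 ^ k + 3 ^ k = 2 * 3 ^ k by ring] at h'
  have h2 : (List.range j).map (fun i => sierpinski (2 * 3 ^ k + i)) =
      (List.range j).map (fun j => sierpinski j) := by
    apply List.map_congr_left
    intro i hi
    exact sierpinski_right (lt_of_lt_of_le (List.mem_range.mp hi) h)
  rw [h1, h2]
  rfl

/-! ### Real-analytic lemmas -/

lemma alpha_pos : 0 < Real.logb 3 2 := Real.logb_pos (by norm_num) (by norm_num)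

lemma alpha_lt_one : Real.logb 3 2 < 1 := by
  have h := (Real.logb_lt_iff_lt_rpow (b := 3) (y := 1) (x := 2)
    (by norm_num) (by norm_num)).mpr
  exact h (by norm_num)

lemma rpow_three : (3 : ℝ) ^ Real.logb 3 2 = 2 :=
  Real.rpow_logb (by norm_num) (by norm_num) (by norm_num)

lemma rpow_three_pow (k : ℕ) : ((3 : ℝ) ^ k) ^ Real.logb 3 2 = 2 ^ k := by
  rw [← Real.rpow_natCast 3 k, ← Real.rpow_natCast 2 k,
    ← Real.rpow_mul (by norm_num : (0:ℝ) ≤ 3), mul_comm,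
    Real.rpow_mul (by norm_num : (0:ℝ) ≤ 3), rpow_three]

lemma rpow_four_point {α : ℝ} (hα0 : 0 ≤ α) (hα1 : α ≤ 1) {p q r : ℝ}
    (hp : 0 ≤ p) (hpr : p ≤ r) (hrq : r ≤ q) :
    p ^ α + q ^ α ≤ r ^ α + (p + q - r) ^ α := by
  rcases eq_or_lt_of_le (hpr.trans hrq) with heq | hlt
  · have h1 : r = p := le_antisymm (heq ▸ hrq) hpr
    have h2 : q = p := heq.symm
    rw [h1, h2]
    have h3 : p + p - p = p := by ring
    rw [h3]
  · set l : ℝ := (q - r) / (q - p) with hl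
    have hqp : 0 < q - p := by linarith
    have hl0 : 0 ≤ l := div_nonneg (by linarith) hqp.le
    have hl1 : l ≤ 1 := (div_le_one hqp).mpr (by linarith)
    have C := Real.concaveOn_rpow hα0 hα1
    have hq : (0:ℝ) ≤ q := by linarith
    have key : l * (q - p) = q - r := by rw [hl]; field_simp
    have h1 := C.2 (Set.mem_Ici.mpr hp) (Set.mem_Ici.mpr hq) hl0 (by linarith : 0 ≤ 1 - l)
      (by ring)
    have h2 := C.2 (Set.mem_Ici.mpr hp) (Set.mem_Ici.mpr hq) (by linarith : 0 ≤ 1 - l) hl0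
      (by ring)
    rw [smul_eq_mul, smul_eq_mul, smul_eq_mul, smul_eq_mul] at h1 h2
    dsimp only at h1 h2
    have e1 : l * p + (1 - l) * q = r := by nlinarith [key]
    have e2 : (1 - l) * p + l * q = p + q - r := by nlinarith [key]
    rw [e1] at h1
    rw [e2] at h2
    linarith

/-! ### Main bounds -/

lemma main_bounds : ∀ n : ℕ, 1 ≤ n →
    ((n : ℝ) / 2) ^ (Real.logb 3 2) ≤ (SA n : ℝ) ∧
      (SA n : ℝ) ≤ (n : ℝ) ^ (Real.logb 3 2) := by
  intro n
  induction n using Nat.strong_induction_on with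
  | _ n ih =>
    intro hn
    have hα0 : 0 < Real.logb 3 2 := alpha_pos
    have hα1 : Real.logb 3 2 < 1 := alpha_lt_one
    set α := Real.logb 3 2 with hαdef
    rcases eq_or_lt_of_le hn with h1 | h2
    · -- n = 1
      rw [← h1]
      have hSA : SA 1 = 1 := by simpa using SA_pow 0
      rw [hSA]
      push_cast
      constructor
      · exact Real.rpow_le_one (by norm_num) (by norm_num) hα0.le
      · rw [Real.one_rpow]
    · -- 2 ≤ n
      set k := Nat.log 3 (n - 1) with hk
      have hn1 : n - 1 ≠ 0 := by omega
      have hlow : 3 ^ k < n := by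
        have h := Nat.pow_log_le_self 3 hn1
        rw [← hk] at h; omega
      have hhigh : n ≤ 3 ^ (k + 1) := by
        have h := Nat.lt_pow_succ_log_self (b := 3) (by norm_num) (n - 1)
        rw [← hk] at h; omega
      have e3 : 3 ^ (k + 1) = 3 * 3 ^ k := by ring
      have c2k : ((3:ℝ) ^ k) ^ α = 2 ^ k := rpow_three_pow k
      have hcpos : (0:ℝ) < (3:ℝ) ^ k := by positivity
      by_cases hc : n ≤ 2 * 3 ^ k
      · -- middle region: SA n = 2 ^ k
        have hSA : SA n = 2 ^ k := by
          have h := SA_mid (k := k) (j := n - 3 ^ k) (by omega)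
          rwa [show 3 ^ k + (n - 3 ^ k) = n by omega] at h
        rw [hSA]
        push_cast
        constructor
        · calc ((n:ℝ)/2) ^ α ≤ ((3:ℝ)^k) ^ α := by
                apply Real.rpow_le_rpow (by positivity) ?_ hα0.le
                have h' : (n : ℝ) ≤ 2 * 3 ^ k := by exact_mod_cast hc
                linarith
            _ = 2 ^ k := c2k
        · calc ((2:ℝ))^k = ((3:ℝ)^k) ^ α := c2k.symm
            _ ≤ (n:ℝ) ^ α := by
                apply Real.rpow_le_rpow hcpos.le ?_ hα0.le
                exact_mod_cast hlow.le
      · -- right region: SA n = 2 ^ k + SA m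
        push_neg at hc
        have hm1 : 1 ≤ n - 2 * 3 ^ k := by omega
        set m := n - 2 * 3 ^ k with hm
        have hm3 : m ≤ 3 ^ k := by omega
        have hmn : m < n := by
          have : 0 < 3 ^ k := Nat.pow_pos (by norm_num)
          omega
        have hSA : SA n = 2 ^ k + SA m := by
          have h := SA_right (k := k) (j := m) hm3
          rwa [show 2 * 3 ^ k + m = n by omega] at h
        obtain ⟨ihl, ihu⟩ := ih m hmn hm1
        have hncast : (n : ℝ) = 2 * (3:ℝ) ^ k + (m : ℝ) := by
          have h' : n = 2 * 3 ^ k + m := by omega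
          rw [h']; push_cast; ring
        have hM0 : (0:ℝ) ≤ (m:ℝ) := by positivity
        have hMc : (m:ℝ) ≤ (3:ℝ) ^ k := by exact_mod_cast hm3
        rw [hSA]
        push_cast
        constructor
        · -- lower bound
          have fp := rpow_four_point hα0.le hα1.le (p := 0) (r := (m:ℝ)/2)
            (q := (3:ℝ)^k + (m:ℝ)/2) (le_refl 0) (by linarith) (by linarith)
          rw [Real.zero_rpow hα0.ne'] at fp
          have e : (0 + ((3:ℝ)^k + (m:ℝ)/2) - (m:ℝ)/2) = (3:ℝ)^k := by ring
          rw [e] at fp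
          have e2 : (n:ℝ)/2 = (3:ℝ)^k + (m:ℝ)/2 := by rw [hncast]; ring
          rw [e2]
          linarith [fp, ihl, c2k]
        · -- upper bound
          have fp := rpow_four_point hα0.le hα1.le (p := (m:ℝ)) (r := (3:ℝ)^k)
            (q := 3 * (3:ℝ)^k) hM0 hMc (by linarith)
          have e : ((m:ℝ) + 3 * (3:ℝ)^k - (3:ℝ)^k) = 2 * (3:ℝ)^k + (m:ℝ) := by ring
          rw [e] at fp
          have h3c : (3 * (3:ℝ)^k) ^ α = 2 * 2 ^ k := by
            rw [Real.mul_rpow (by norm_num) hcpos.le, rpow_three, c2k]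
          rw [hncast]
          linarith [fp, ihu, c2k, h3c]

/-- `A(n)`, the number of occurrences of the letter `a` in the prefix of the
Sierpiński word of length `n`, satisfies `(n/2)^{log_3 2} ≤ A(n) ≤ n^{log_3 2}`. -/
theorem sierpinski_prefix_count_bounds :
    ∀ n : ℕ, 1 ≤ n →
      ((n : ℝ) / 2) ^ (Real.logb 3 2) ≤
        (((List.range n).map (fun j => sierpinski j)).count true : ℝ) ∧
      (((List.range n).map (fun j => sierpinski j)).count true : ℝ) ≤
        (n : ℝ) ^ (Real.logb 3 2) := by
  exact main_bounds
end

section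
/- Let n ≥ 3 and ℓ ≥ 0 be integers, and consider the factor P_{ℓ+1} P_{ℓ+2} ⋯ P_{ℓ+2^n} of the regular paperfolding word P, split into 2^{n−1} consecutive blocks of length 2. For 1 ≤ i ≤ 2^{n−1}, let c_i = P_{ℓ+2i−1} + P_{ℓ+2i} be the number of 1's in the i-th block. If 1 ≤ q ≤ 2^{n−1} is such that the sequence (c_1, …, c_{2^{n−1}}) equals its cyclic shift by q, i.e., (c_1, …, c_{2^{n−1}}) = (c_{q+1}, …, c_{2^{n−1}}, c_1, …, c_q), then q = 2^{n−1}. -/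
/-!
One letter of each block sits at an odd position, where `P (2s + 1) = s % 2`, and the other at an
even one, where `P (2m) = P m`; so the block counts are `c i = P (m + i) + (i + δ) % 2` for some
`m, δ`. With `N = 2 ^ (n - 2)`, a shift by `q`, `0 < q < 2N`, generates the shift by `N` modulo
`2N`, and this even shift leaves the parity term unchanged, so `P (m + i) = P (m + i + N)` for
`i < N`. This fails at the position `2 ^ (n - 3) (2s + 1)` of the window `[m, m + N)`: its letter
is `s % 2`, that of `2 ^ (n - 3) (2s + 3)` is `(s + 1) % 2`.
-/

/-- The regular paperfolding word `P = P₁P₂⋯` (0/1-valued, as a natural number):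
`P_i = 1` iff `i ≡ 3·2^{ν₂(i)} (mod 2^{ν₂(i)+2})`, where `ν₂` is the 2-adic
valuation. (The value at `i = 0` is irrelevant.) -/
def regularPF (i : ℕ) : ℕ :=
  if i % 2 ^ (padicValNat 2 i + 2) = 3 * 2 ^ (padicValNat 2 i) then 1 else 0

open Function

theorem Function.Periodic.of_mul_mod_eq {α : Type*} {f : ℕ → α} {N q a p : ℕ}
    (hN : Periodic f N) (hq : Periodic f q) (h : a * q % N = p % N) : Periodic f p := fun x => by
  rw [← hN.map_mod_nat, Nat.add_mod, ← h, ← Nat.add_mod, hN.map_mod_nat, ← smul_eq_mul,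
    hq.nsmul]

lemma periodic_mod_of_forall_lt {α : Type*} {c : ℕ → α} {N q : ℕ} (hN : 0 < N)
    (h : ∀ i < N, c i = c ((i + q) % N)) : Periodic (fun i => c (i % N)) q := fun i => by
  show c ((i + q) % N) = c (i % N)
  rw [← Nat.mod_add_mod]
  exact (h _ (Nat.mod_lt _ hN)).symm

lemma exists_mul_mod_two_pow_eq {q k : ℕ} (hq : q ≠ 0) (hqk : q < 2 ^ (k + 1)) :
    ∃ a, a * q % 2 ^ (k + 1) = 2 ^ k := by
  obtain ⟨t, r, ⟨b, rfl⟩, rfl⟩ := Nat.exists_eq_two_pow_mul_odd hq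
  have htk : t < k + 1 := (Nat.pow_lt_pow_iff_right one_lt_two).1
    ((Nat.le_mul_of_pos_right _ (by omega)).trans_lt hqk)
  refine ⟨2 ^ (k - t), ?_⟩
  rw [show 2 ^ (k - t) * (2 ^ t * (2 * b + 1)) = 2 ^ k + b * 2 ^ (k + 1) by
    rw [← mul_assoc, ← pow_add, Nat.sub_add_cancel (Nat.le_of_lt_succ htk)]; ring]
  rw [Nat.add_mul_mod_self_right,
    Nat.mod_eq_of_lt (Nat.pow_lt_pow_right one_lt_two k.lt_succ_self)]

lemma regularPF_two_mul_add_one (m : ℕ) : regularPF (2 * m + 1) = m % 2 := by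
  have hv : padicValNat 2 (2 * m + 1) = 0 := padicValNat.eq_zero_of_not_dvd (by omega)
  unfold regularPF
  rw [hv]
  split_ifs <;> omega

lemma regularPF_two_mul {m : ℕ} (hm : m ≠ 0) : regularPF (2 * m) = regularPF m := by
  have hv : padicValNat 2 (2 * m) = padicValNat 2 m + 1 := by
    rw [padicValNat.mul two_ne_zero hm, padicValNat.self one_lt_two, add_comm]
  unfold regularPF
  rw [hv, show 2 ^ (padicValNat 2 m + 1 + 2) = 2 * 2 ^ (padicValNat 2 m + 2) by ring,
    show 3 * 2 ^ (padicValNat 2 m + 1) = 2 * (3 * 2 ^ padicValNat 2 m) by ring,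
    Nat.mul_mod_mul_left]
  exact if_congr (by omega) rfl rfl

lemma regularPF_two_pow_mul_odd (j s : ℕ) : regularPF (2 ^ j * (2 * s + 1)) = s % 2 := by
  induction j with
  | zero => simpa using regularPF_two_mul_add_one s
  | succ j ih => rw [pow_succ', mul_assoc, regularPF_two_mul (by positivity), ih]

lemma exists_regularPF_add_two_pow_ne (m j : ℕ) :
    ∃ i < 2 ^ (j + 1), regularPF (m + i + 2 ^ (j + 1)) ≠ regularPF (m + i) := by
  obtain ⟨i, s, hi, hs⟩ : ∃ i s, i < 2 ^ (j + 1) ∧ m + i = 2 ^ j * (2 * s + 1) := by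
    set M := 2 ^ j
    have hM : 0 < M := by positivity
    have hdiv := Nat.div_add_mod m (2 * M)
    have hmod := Nat.mod_lt m (show 0 < 2 * M by omega)
    set a := m / (2 * M)
    set b := m % (2 * M)
    rw [pow_succ', show 2 ^ j = M from rfl]
    rcases le_or_gt b M with hb | hb
    · exact ⟨M - b, a, by omega, by rw [← hdiv]; ring_nf; omega⟩
    · exact ⟨3 * M - b, a + 1, by omega, by rw [← hdiv]; ring_nf; omega⟩
  refine ⟨i, hi, ?_⟩
  rw [hs, show 2 ^ j * (2 * s + 1) + 2 ^ (j + 1) = 2 ^ j * (2 * (s + 1) + 1) by ring,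
    regularPF_two_pow_mul_odd, regularPF_two_pow_mul_odd]
  omega

def regularPFBlockCount (ℓ i : ℕ) : ℕ :=
  regularPF (ℓ + 2 * i + 1) + regularPF (ℓ + 2 * i + 2)

lemma exists_regularPFBlockCount_eq (ℓ : ℕ) :
    ∃ m δ, ∀ i, regularPFBlockCount ℓ i = regularPF (m + i) + (i + δ) % 2 := by
  obtain ⟨a, rfl | rfl⟩ := Nat.even_or_odd' ℓ
  · refine ⟨a + 1, a, fun i => ?_⟩
    rw [regularPFBlockCount, show 2 * a + 2 * i + 1 = 2 * (a + i) + 1 by ring,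
      show 2 * a + 2 * i + 2 = 2 * (a + 1 + i) by ring, regularPF_two_mul_add_one,
      regularPF_two_mul (by omega)]
    omega
  · refine ⟨a + 1, a + 1, fun i => ?_⟩
    rw [regularPFBlockCount, show 2 * a + 1 + 2 * i + 1 = 2 * (a + 1 + i) by ring,
      show 2 * a + 1 + 2 * i + 2 = 2 * (a + 1 + i) + 1 by ring, regularPF_two_mul_add_one,
      regularPF_two_mul (by omega)]
    omega

/-- Consider the factor `P_{ℓ+1} ⋯ P_{ℓ+2^n}` of the regular paperfolding word,
split into `2^{n-1}` consecutive blocks of length 2, and let `c i` (for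
`0 ≤ i < 2^{n-1}`) be the number of `1`'s in the `(i+1)`-st block. If the
sequence of the `c i` equals its cyclic shift by `q` with `1 ≤ q ≤ 2^{n-1}`,
then `q = 2^{n-1}`. -/
theorem regularPF_block_counts_no_nontrivial_cyclic_shift
    (n ℓ q : ℕ) (hn : 3 ≤ n) (hq1 : 1 ≤ q) (hq2 : q ≤ 2 ^ (n - 1))
    (hshift : ∀ i < 2 ^ (n - 1),
      regularPF (ℓ + 2 * i + 1) + regularPF (ℓ + 2 * i + 2) =
        regularPF (ℓ + 2 * ((i + q) % 2 ^ (n - 1)) + 1) +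
        regularPF (ℓ + 2 * ((i + q) % 2 ^ (n - 1)) + 2)) :
    q = 2 ^ (n - 1) := by
  obtain ⟨k, rfl⟩ : ∃ k, n = k + 3 := ⟨n - 3, by omega⟩
  rw [show k + 3 - 1 = k + 1 + 1 by omega] at hq2 hshift ⊢
  by_contra hne
  set c : ℕ → ℕ := fun i => regularPFBlockCount ℓ (i % 2 ^ (k + 1 + 1))
  have hq : Periodic c q := periodic_mod_of_forall_lt (by positivity) hshift
  obtain ⟨a, ha⟩ := exists_mul_mod_two_pow_eq (by omega) (lt_of_le_of_ne hq2 hne)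
  have hN : Periodic c (2 ^ (k + 1 + 1)) := fun i => by simp only [c, Nat.add_mod_right]
  have hhalf : Periodic c (2 ^ (k + 1)) := hN.of_mul_mod_eq hq
      (by rw [ha, Nat.mod_eq_of_lt (Nat.pow_lt_pow_right one_lt_two (k + 1).lt_succ_self)])
  obtain ⟨m, δ, hblock⟩ := exists_regularPFBlockCount_eq ℓ
  obtain ⟨i, hi, hletter⟩ := exists_regularPF_add_two_pow_ne m k
  have hci : c (i + 2 ^ (k + 1)) = c i := hhalf i
  simp only [c] at hci
  rw [Nat.mod_eq_of_lt (by rw [pow_succ _ (k + 1)]; omega), Nat.mod_eq_of_lt (by omega), hblock,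
    hblock, ← add_assoc] at hci
  have heven : 2 ^ (k + 1) % 2 = 0 := by simp [pow_succ]
  exact hletter (by omega)
end

section
/- Let u ≥ 2 and n ≥ u + 3 be integers, let f be any paperfolding word (associated with an arbitrary instruction sequence b), and let ℓ ≥ 0. Consider the factor f_{ℓ+1} ⋯ f_{ℓ+2^n} of f split into 2^{n−u} consecutive blocks of length 2^u, and for 1 ≤ i ≤ 2^{n−u} let c_i be the number of 1's in the i-th block (the sum f_{ℓ+(i−1)2^u+1} + ⋯ + f_{ℓ+i·2^u}). If 1 ≤ q ≤ 2^{n−u} is such that (c_1, …, c_{2^{n−u}}) = (c_{q+1}, …, c_{2^{n−u}}, c_1, …, c_q), then q = 2^{n−u}. -/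
/-- The paperfolding word (0/1-valued, as a natural number) associated with the
instruction sequence `b` (with values in `{-1,1}`):
`f_i = 1` iff `i ≡ 2^k(2 + b_k) (mod 2^{k+2})`, where `k = ν₂(i)` is the
2-adic valuation of `i`. (The value at `i = 0` is irrelevant.) -/
def pfoldN (b : ℕ → ℤ) (i : ℕ) : ℕ :=
  if (i : ℤ) ≡ 2 ^ (padicValNat 2 i) * (2 + b (padicValNat 2 i))
      [ZMOD (2 ^ (padicValNat 2 i + 2))] then 1 else 0

lemma pfold_le_one (b : ℕ → ℤ) (i : ℕ) : pfoldN b i ≤ 1 := by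
  unfold pfoldN; split <;> simp

lemma pfold_congr {b b' : ℕ → ℤ} (m : ℕ) (h : ∀ k, b k = b' k) :
    pfoldN b m = pfoldN b' m := by
  have : b = b' := funext h
  rw [this]

lemma padic_odd {m : ℕ} (hm : m % 2 = 1) : padicValNat 2 m = 0 :=
  padicValNat.eq_zero_of_not_dvd (by omega)

lemma pfold_two_mul (b : ℕ → ℤ) (m : ℕ) (hm : m ≠ 0) :
    pfoldN b (2 * m) = pfoldN (fun k => b (k + 1)) m := by
  have hv : padicValNat 2 (2 * m) = padicValNat 2 m + 1 := by
    rw [padicValNat.mul (by norm_num) hm, padicValNat.self (by norm_num)]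
    omega
  simp only [pfoldN, hv]
  set v := padicValNat 2 m with hvdef
  have hiff : ((2 * m : ℕ) : ℤ) ≡ 2 ^ (v + 1) * (2 + b (v + 1)) [ZMOD 2 ^ (v + 1 + 2)]
      ↔ ((m : ℕ) : ℤ) ≡ 2 ^ v * (2 + b (v + 1)) [ZMOD 2 ^ (v + 2)] := by
    rw [Int.modEq_iff_dvd, Int.modEq_iff_dvd]
    have h1 : (2 : ℤ) ^ (v + 1) * (2 + b (v + 1)) - (2 * m : ℕ) =
        2 * (2 ^ v * (2 + b (v + 1)) - (m : ℤ)) := by push_cast; ring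
    have h2 : (2 : ℤ) ^ (v + 1 + 2) = 2 * 2 ^ (v + 2) := by ring
    rw [h1, h2, mul_dvd_mul_iff_left (by norm_num : (2:ℤ) ≠ 0)]
  rw [if_congr hiff rfl rfl]

lemma pfold_odd_pair (b : ℕ → ℤ) (hb0 : b 0 = 1 ∨ b 0 = -1) (m : ℕ) (hm : m % 2 = 1) :
    pfoldN b m + pfoldN b (m + 2) = 1 := by
  have h1 : padicValNat 2 m = 0 := padic_odd hm
  have h2 : padicValNat 2 (m + 2) = 0 := padic_odd (by omega)
  simp only [pfoldN, h1, h2, pow_zero, one_mul, zero_add, Int.ModEq]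
  have h4 : (2 : ℤ) ^ 2 = 4 := by norm_num
  rw [h4]
  rcases hb0 with h | h <;> rw [h] <;> split_ifs <;> omega

lemma pfold_odd_mod4 (b : ℕ → ℤ) (m m' : ℕ) (hm : m % 2 = 1) (hm' : m' % 2 = 1)
    (h4 : m % 4 = m' % 4) : pfoldN b m = pfoldN b m' := by
  simp only [pfoldN, padic_odd hm, padic_odd hm', pow_zero, one_mul, zero_add, Int.ModEq]
  have hp : (2 : ℤ) ^ 2 = 4 := by norm_num
  rw [hp]
  split_ifs <;> omega

/-- helper: value at an even point in terms of the decimated word -/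
lemma pfold_even_eq (b : ℕ → ℤ) (v : ℕ) (x a : ℕ) (hx : x = 2 * a) (ha : a ≠ 0) :
    pfoldN (fun k => b (v + k)) x = pfoldN (fun k => b (v + 1 + k)) a := by
  rw [hx, pfold_two_mul _ _ ha]
  exact pfold_congr a (fun k => by congr 1; omega)

lemma pfold_blocksum (b : ℕ → ℤ) (hb : ∀ k, b k = 1 ∨ b k = -1) :
    ∀ u, 2 ≤ u → ∀ M : ℕ,
      ∑ j ∈ Finset.range (2 ^ u), pfoldN b (M + j + 1)
        = 2 ^ (u - 1) - 1 + (pfoldN (fun k => b (u - 1 + k)) (M / 2 ^ (u - 1) + 1)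
          + pfoldN (fun k => b (u - 1 + k)) (M / 2 ^ (u - 1) + 2)) := by
  intro u hu
  induction u, hu using Nat.le_induction with
  | base =>
    intro M
    rw [show (2 : ℕ) ^ 2 = 4 from rfl, Finset.sum_range_succ, Finset.sum_range_succ,
      Finset.sum_range_succ, Finset.sum_range_one]
    have hb0 : ∀ m : ℕ, pfoldN b m = pfoldN (fun k => b (0 + k)) m :=
      fun m => pfold_congr m (fun k => by congr 1; omega)
    have hp1 : (2:ℕ) ^ (2 - 1) = 2 := by norm_num
    rcases Nat.even_or_odd M with ⟨a, ha⟩ | ⟨a, ha⟩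
    · -- M = 2a, odds: M+1, M+3; evens M+2 = 2(a+1), M+4 = 2(a+2)
      have hA : pfoldN b (M + 1 + 1) = pfoldN (fun k => b (2 - 1 + k)) (a + 1) := by
        rw [hb0, pfold_even_eq b 0 _ (a + 1) (by omega) (by omega)]
        try exact pfold_congr _ (fun k => by congr 1)
      have hB : pfoldN b (M + 3 + 1) = pfoldN (fun k => b (2 - 1 + k)) (a + 2) := by
        rw [hb0, pfold_even_eq b 0 _ (a + 2) (by omega) (by omega)]
        try exact pfold_congr _ (fun k => by congr 1)
      have hpair : pfoldN b (M + 0 + 1) + pfoldN b (M + 2 + 1) = 1 := by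
        have := pfold_odd_pair b (hb 0) (M + 1) (by omega)
        rw [show M + 0 + 1 = M + 1 by omega, show M + 2 + 1 = M + 1 + 2 by omega]
        exact this
      have hr1 : pfoldN (fun k => b (2 - 1 + k)) (M / 2 ^ (2 - 1) + 1)
          = pfoldN (fun k => b (2 - 1 + k)) (a + 1) := by rw [hp1]; congr 1 <;> omega
      have hr2 : pfoldN (fun k => b (2 - 1 + k)) (M / 2 ^ (2 - 1) + 2)
          = pfoldN (fun k => b (2 - 1 + k)) (a + 2) := by rw [hp1]; congr 1 <;> omega
      have hpw : (2:ℕ) ^ (2 - 1) = 2 := hp1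
      omega
    · -- M = 2a+1, odds: M+2, M+4; evens M+1 = 2(a+1), M+3 = 2(a+2)
      have hA : pfoldN b (M + 0 + 1) = pfoldN (fun k => b (2 - 1 + k)) (a + 1) := by
        rw [hb0, pfold_even_eq b 0 _ (a + 1) (by omega) (by omega)]
        try exact pfold_congr _ (fun k => by congr 1)
      have hB : pfoldN b (M + 2 + 1) = pfoldN (fun k => b (2 - 1 + k)) (a + 2) := by
        rw [hb0, pfold_even_eq b 0 _ (a + 2) (by omega) (by omega)]
        try exact pfold_congr _ (fun k => by congr 1)
      have hpair : pfoldN b (M + 1 + 1) + pfoldN b (M + 3 + 1) = 1 := by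
        have := pfold_odd_pair b (hb 0) (M + 2) (by omega)
        rw [show M + 1 + 1 = M + 2 by omega, show M + 3 + 1 = M + 2 + 2 by omega]
        exact this
      have hr1 : pfoldN (fun k => b (2 - 1 + k)) (M / 2 ^ (2 - 1) + 1)
          = pfoldN (fun k => b (2 - 1 + k)) (a + 1) := by rw [hp1]; congr 1 <;> omega
      have hr2 : pfoldN (fun k => b (2 - 1 + k)) (M / 2 ^ (2 - 1) + 2)
          = pfoldN (fun k => b (2 - 1 + k)) (a + 2) := by rw [hp1]; congr 1 <;> omega
      have hpw : (2:ℕ) ^ (2 - 1) = 2 := hp1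
      omega
  | succ u hu ih =>
    intro M
    have hpos : 0 < 2 ^ (u - 1) := Nat.pow_pos (by norm_num)
    have hpow : (2 : ℕ) ^ u = 2 ^ (u - 1) * 2 := by
      rw [← pow_succ]; congr 1; omega
    have hsum : ∑ j ∈ Finset.range (2 ^ (u + 1)), pfoldN b (M + j + 1)
        = (∑ j ∈ Finset.range (2 ^ u), pfoldN b (M + j + 1))
          + ∑ j ∈ Finset.range (2 ^ u), pfoldN b (M + 2 ^ u + j + 1) := by
      rw [show (2 : ℕ) ^ (u + 1) = 2 ^ u + 2 ^ u by ring, Finset.sum_range_add]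
      congr 1
      apply Finset.sum_congr rfl
      intro j _
      congr 1
      omega
    rw [hsum, ih M, ih (M + 2 ^ u)]
    have hd : (M + 2 ^ u) / 2 ^ (u - 1) = M / 2 ^ (u - 1) + 2 := by
      rw [show M + 2 ^ u = M + 2 ^ (u - 1) * 2 by rw [hpow]]
      exact Nat.add_mul_div_left _ _ hpos
    rw [hd]
    set t := M / 2 ^ (u - 1) with ht
    have ht2 : M / 2 ^ (u + 1 - 1) = t / 2 := by
      rw [show (2:ℕ) ^ (u + 1 - 1) = 2 ^ (u - 1) * 2 by rw [← pow_succ]; congr 1; omega,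
        ← Nat.div_div_eq_div_mul]
    have hpw2 : (2:ℕ) ^ (u + 1 - 1) = 2 ^ (u - 1) * 2 := by
      rw [← pow_succ]; congr 1; omega
    have h2le : 2 ≤ 2 ^ (u - 1) := by
      calc (2:ℕ) = 2 ^ 1 := rfl
      _ ≤ 2 ^ (u - 1) := Nat.pow_le_pow_right (by norm_num) (by omega)
    rcases Nat.even_or_odd t with ⟨c, hc⟩ | ⟨c, hc⟩
    · -- t = 2c: odds t+1, t+3 sum 1; evens t+2 = 2(c+1), t+4 = 2(c+2)
      have hA : pfoldN (fun k => b (u - 1 + k)) (t + 2)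
          = pfoldN (fun k => b (u + 1 - 1 + k)) (c + 1) := by
        rw [pfold_even_eq b (u - 1) _ (c + 1) (by omega) (by omega)]
        try exact pfold_congr _ (fun k => by congr 1; omega)
      have hB : pfoldN (fun k => b (u - 1 + k)) (t + 2 + 2)
          = pfoldN (fun k => b (u + 1 - 1 + k)) (c + 2) := by
        rw [pfold_even_eq b (u - 1) _ (c + 2) (by omega) (by omega)]
        try exact pfold_congr _ (fun k => by congr 1; omega)
      have hpair : pfoldN (fun k => b (u - 1 + k)) (t + 1)
          + pfoldN (fun k => b (u - 1 + k)) (t + 1 + 2) = 1 :=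
        pfold_odd_pair (fun k => b (u - 1 + k)) (hb (u - 1 + 0)) (t + 1) (by omega)
      have he1 : pfoldN (fun k => b (u - 1 + k)) (t + 2 + 1)
          = pfoldN (fun k => b (u - 1 + k)) (t + 1 + 2) := by congr 1 <;> omega
      have hr1 : pfoldN (fun k => b (u + 1 - 1 + k)) (M / 2 ^ (u + 1 - 1) + 1)
          = pfoldN (fun k => b (u + 1 - 1 + k)) (c + 1) := by rw [ht2]; congr 1 <;> omega
      have hr2 : pfoldN (fun k => b (u + 1 - 1 + k)) (M / 2 ^ (u + 1 - 1) + 2)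
          = pfoldN (fun k => b (u + 1 - 1 + k)) (c + 2) := by rw [ht2]; congr 1 <;> omega
      omega
    · -- t = 2c+1: odds t+2, t+4 sum 1; evens t+1 = 2(c+1), t+3 = 2(c+2)
      have hA : pfoldN (fun k => b (u - 1 + k)) (t + 1)
          = pfoldN (fun k => b (u + 1 - 1 + k)) (c + 1) := by
        rw [pfold_even_eq b (u - 1) _ (c + 1) (by omega) (by omega)]
        try exact pfold_congr _ (fun k => by congr 1; omega)
      have hB : pfoldN (fun k => b (u - 1 + k)) (t + 2 + 1)
          = pfoldN (fun k => b (u + 1 - 1 + k)) (c + 2) := by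
        rw [pfold_even_eq b (u - 1) _ (c + 2) (by omega) (by omega)]
        try exact pfold_congr _ (fun k => by congr 1; omega)
      have hpair : pfoldN (fun k => b (u - 1 + k)) (t + 2)
          + pfoldN (fun k => b (u - 1 + k)) (t + 2 + 2) = 1 :=
        pfold_odd_pair (fun k => b (u - 1 + k)) (hb (u - 1 + 0)) (t + 2) (by omega)
      have hr1 : pfoldN (fun k => b (u + 1 - 1 + k)) (M / 2 ^ (u + 1 - 1) + 1)
          = pfoldN (fun k => b (u + 1 - 1 + k)) (c + 1) := by rw [ht2]; congr 1 <;> omega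
      have hr2 : pfoldN (fun k => b (u + 1 - 1 + k)) (M / 2 ^ (u + 1 - 1) + 2)
          = pfoldN (fun k => b (u + 1 - 1 + k)) (c + 2) := by rw [ht2]; congr 1 <;> omega
      omega

/-- A paperfolding word has no (local) period `2^j`, `j ≥ 1`, on a window of
length `2 * 2^j`. -/
lemma pfold_no_period : ∀ j, 1 ≤ j → ∀ b : ℕ → ℤ, (∀ k, b k = 1 ∨ b k = -1) →
    ∀ s : ℕ, (∀ i < 2 ^ j, pfoldN b (s + 1 + i) = pfoldN b (s + 1 + i + 2 ^ j)) → False := by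
  intro j
  induction j with
  | zero => omega
  | succ j ih =>
    intro _ b hb s hp
    rcases Nat.eq_zero_or_pos j with hj | hj
    · -- base: j = 0, period 2
      subst hj
      have h0 := hp 0 (by norm_num)
      have h1 := hp 1 (by norm_num)
      norm_num at h0 h1
      rcases Nat.even_or_odd s with ⟨a, ha⟩ | ⟨a, ha⟩
      · have := pfold_odd_pair b (hb 0) (s + 1) (by omega)
        have he : pfoldN b (s + 1 + 2) = pfoldN b (s + 1 + 0 + 2) := by congr 1 <;> omega
        omega
      · have := pfold_odd_pair b (hb 0) (s + 2) (by omega)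
        have he : pfoldN b (s + 2 + 2) = pfoldN b (s + 1 + 1 + 2) := by congr 1 <;> omega
        have he2 : pfoldN b (s + 2) = pfoldN b (s + 1 + 1) := by congr 1 <;> omega
        omega
    · -- step
      apply ih hj (fun k => b (k + 1)) (fun k => hb (k + 1)) (s / 2)
      intro i hi
      have hpow : (2:ℕ) ^ (j + 1) = 2 * 2 ^ j := by ring
      set a := s / 2 + 1 + i with hadef
      have ha0 : a ≠ 0 := by omega
      have key : pfoldN b (2 * a) = pfoldN b (2 * a + 2 ^ (j + 1)) := by
        have hlo : s + 1 ≤ 2 * a := by omega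
        have hhi : 2 * a < s + 1 + 2 ^ (j + 1) := by omega
        have := hp (2 * a - (s + 1)) (by omega)
        have e1 : s + 1 + (2 * a - (s + 1)) = 2 * a := by omega
        rw [e1] at this
        exact this
      rw [← pfold_two_mul b a ha0, ← pfold_two_mul b (a + 2 ^ j) (by omega)]
      rw [show 2 * (a + 2 ^ j) = 2 * a + 2 ^ (j + 1) by omega]
      exact key

/-- Let `u ≥ 2`, `n ≥ u + 3`, and let `f` be the paperfolding word associated
with an arbitrary instruction sequence `b`. Consider the factor
`f_{ℓ+1} ⋯ f_{ℓ+2^n}` split into `2^{n-u}` consecutive blocks of length `2^u`,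
and let `c i` (for `0 ≤ i < 2^{n-u}`) be the number of `1`'s in the `(i+1)`-st
block. If the sequence of the `c i` equals its cyclic shift by `q` with
`1 ≤ q ≤ 2^{n-u}`, then `q = 2^{n-u}`. -/
theorem pfold_block_counts_no_nontrivial_cyclic_shift
    (b : ℕ → ℤ) (hb : ∀ k, b k = 1 ∨ b k = -1)
    (u n ℓ q : ℕ) (hu : 2 ≤ u) (hn : u + 3 ≤ n)
    (hq1 : 1 ≤ q) (hq2 : q ≤ 2 ^ (n - u))
    (hshift : ∀ i < 2 ^ (n - u),
      (∑ j ∈ Finset.range (2 ^ u), pfoldN b (ℓ + 2 ^ u * i + j + 1)) =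
        ∑ j ∈ Finset.range (2 ^ u),
          pfoldN b (ℓ + 2 ^ u * ((i + q) % 2 ^ (n - u)) + j + 1)) :
    q = 2 ^ (n - u) := by
  by_contra hne
  set N := 2 ^ (n - u) with hN
  have hNpos : 0 < N := Nat.pow_pos (by norm_num)
  have hqlt : q < N := lt_of_le_of_ne hq2 hne
  have hN8 : 8 ≤ N := by
    rw [hN]
    calc (8:ℕ) = 2 ^ 3 := rfl
    _ ≤ 2 ^ (n - u) := Nat.pow_le_pow_right (by norm_num) (by omega)
  set g := Nat.gcd q N with hg
  have hg1 : 1 ≤ g := Nat.gcd_pos_of_pos_left N (by omega)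
  have hgN : g ∣ N := Nat.gcd_dvd_right q N
  have hglt : g < N := lt_of_le_of_lt (Nat.gcd_le_left N (by omega)) hqlt
  -- the cyclic block-count function
  set c : ℕ → ℕ :=
    fun i => ∑ j ∈ Finset.range (2 ^ u), pfoldN b (ℓ + 2 ^ u * (i % N) + j + 1) with hc
  have hstep : ∀ i, c i = c (i + q) := by
    intro i
    have h1 := hshift (i % N) (Nat.mod_lt _ hNpos)
    have h2 : (i % N + q) % N = (i + q) % N := Nat.mod_add_mod i N q
    simp only [hc]
    rw [h2] at h1
    exact h1
  have hiter : ∀ t i, c i = c (i + q * t) := by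
    intro t
    induction t with
    | zero => simp
    | succ t iht =>
      intro i
      have h1 := iht i
      have h2 := hstep (i + q * t)
      have h3 : i + q * t + q = i + q * (t + 1) := by ring
      rw [h3] at h2
      exact h1.trans h2
  have hckey : ∀ i, c i = c (i + g) := by
    obtain ⟨t, -, ht⟩ := Nat.exists_mul_mod_eq_gcd (n := q) (k := N) (hg ▸ hglt)
    intro i
    refine (hiter t i).trans ?_
    simp only [hc]
    have hmodeq : (i + q * t) % N = (i + g) % N := by
      rw [Nat.add_mod i (q * t) N, ht, ← hg, Nat.mod_add_mod]
    rw [hmodeq]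
  -- block sums in terms of the decimated paperfolding word
  set s := ℓ / 2 ^ (u - 1) with hs
  set σ := s / 2 with hσ
  have hA : ∀ i, i < N → c i = 2 ^ (u - 1) - 1
      + (pfoldN (fun k => b (u - 1 + k)) (s + 2 * i + 1)
        + pfoldN (fun k => b (u - 1 + k)) (s + 2 * i + 2)) := by
    intro i hi
    simp only [hc]
    rw [Nat.mod_eq_of_lt hi, pfold_blocksum b hb u hu (ℓ + 2 ^ u * i)]
    have hdiv : (ℓ + 2 ^ u * i) / 2 ^ (u - 1) = s + 2 * i := by
      rw [show 2 ^ u * i = 2 ^ (u - 1) * (2 * i) by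
        rw [show (2:ℕ) ^ u = 2 ^ (u - 1) * 2 by rw [← pow_succ]; congr 1; omega]; ring]
      rw [Nat.add_mul_div_left _ _ (Nat.pow_pos (by norm_num)), hs]
    rw [hdiv]
  have h5 : ∀ i, i + g < N →
      pfoldN (fun k => b (u - 1 + k)) (s + 2 * i + 1)
        + pfoldN (fun k => b (u - 1 + k)) (s + 2 * i + 2)
      = pfoldN (fun k => b (u - 1 + k)) (s + 2 * (i + g) + 1)
        + pfoldN (fun k => b (u - 1 + k)) (s + 2 * (i + g) + 2) := by
    intro i hig
    have h1 := hckey i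
    rw [hA i (by omega), hA (i + g) (by omega)] at h1
    omega
  have hb1 : ∀ k, (fun k => b (u - 1 + k)) k = 1 ∨ (fun k => b (u - 1 + k)) k = -1 :=
    fun k => hb _
  have hb2 : ∀ k, (fun k => b (u + k)) k = 1 ∨ (fun k => b (u + k)) k = -1 :=
    fun k => hb _
  have hE : ∀ a : ℕ, a ≠ 0 →
      pfoldN (fun k => b (u - 1 + k)) (2 * a) = pfoldN (fun k => b (u + k)) a := by
    intro a ha
    rw [pfold_two_mul _ _ ha]
    exact pfold_congr _ (fun k => by show b (u - 1 + (k + 1)) = b (u + k); congr 1; omega)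
  obtain ⟨r, hrle, hgr⟩ := (Nat.dvd_prime_pow Nat.prime_two).mp (hN ▸ hgN)
  have hrlt : r < n - u := by
    by_contra hcon
    push_neg at hcon
    have : N ≤ g := by
      rw [hgr, hN]
      exact Nat.pow_le_pow_right (by norm_num) hcon
    omega
  have h2g : 2 * g ≤ N := by
    rw [hgr, hN]
    calc 2 * 2 ^ r = 2 ^ (r + 1) := by ring
    _ ≤ 2 ^ (n - u) := Nat.pow_le_pow_right (by norm_num) (by omega)
  rcases Nat.eq_zero_or_pos r with hr0 | hrpos
  · -- g = 1 : the block counts would all be equal; the decimated word alternates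
    have hgeq1 : g = 1 := by rw [hgr, hr0, pow_zero]
    have hdiff : ∀ i, i + 1 < N →
        pfoldN (fun k => b (u + k)) (σ + i + 1) ≠ pfoldN (fun k => b (u + k)) (σ + i + 2) := by
      intro i hi hcontra
      have heq := h5 i (by omega)
      rw [hgeq1] at heq
      rcases Nat.even_or_odd s with ⟨a, hsa⟩ | ⟨a, hsa⟩
      · have hpair : pfoldN (fun k => b (u - 1 + k)) (s + 2 * i + 1)
            + pfoldN (fun k => b (u - 1 + k)) (s + 2 * i + 1 + 2) = 1 :=
          pfold_odd_pair _ (hb1 0) _ (by omega)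
        have hodd2 : pfoldN (fun k => b (u - 1 + k)) (s + 2 * (i + 1) + 1)
            = pfoldN (fun k => b (u - 1 + k)) (s + 2 * i + 1 + 2) := by congr 1 <;> omega
        have he1 : pfoldN (fun k => b (u - 1 + k)) (s + 2 * i + 2)
            = pfoldN (fun k => b (u + k)) (σ + i + 1) := by
          rw [show s + 2 * i + 2 = 2 * (σ + i + 1) by omega]; exact hE _ (by omega)
        have he2 : pfoldN (fun k => b (u - 1 + k)) (s + 2 * (i + 1) + 2)
            = pfoldN (fun k => b (u + k)) (σ + i + 2) := by
          rw [show s + 2 * (i + 1) + 2 = 2 * (σ + i + 2) by omega]; exact hE _ (by omega)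
        omega
      · have hpair : pfoldN (fun k => b (u - 1 + k)) (s + 2 * i + 2)
            + pfoldN (fun k => b (u - 1 + k)) (s + 2 * i + 2 + 2) = 1 :=
          pfold_odd_pair _ (hb1 0) _ (by omega)
        have hodd2 : pfoldN (fun k => b (u - 1 + k)) (s + 2 * (i + 1) + 2)
            = pfoldN (fun k => b (u - 1 + k)) (s + 2 * i + 2 + 2) := by congr 1 <;> omega
        have he1 : pfoldN (fun k => b (u - 1 + k)) (s + 2 * i + 1)
            = pfoldN (fun k => b (u + k)) (σ + i + 1) := by
          rw [show s + 2 * i + 1 = 2 * (σ + i + 1) by omega]; exact hE _ (by omega)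
        have he2 : pfoldN (fun k => b (u - 1 + k)) (s + 2 * (i + 1) + 1)
            = pfoldN (fun k => b (u + k)) (σ + i + 2) := by
          rw [show s + 2 * (i + 1) + 1 = 2 * (σ + i + 2) by omega]; exact hE _ (by omega)
        omega
    have l1 := pfold_le_one (fun k => b (u + k)) (σ + 1)
    have l2 := pfold_le_one (fun k => b (u + k)) (σ + 2)
    have l3 := pfold_le_one (fun k => b (u + k)) (σ + 3)
    have l4 := pfold_le_one (fun k => b (u + k)) (σ + 4)
    rcases Nat.even_or_odd σ with ⟨w, hw⟩ | ⟨w, hw⟩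
    · have d0 := hdiff 0 (by omega)
      have d1 := hdiff 1 (by omega)
      have e0a : pfoldN (fun k => b (u + k)) (σ + 0 + 1) = pfoldN (fun k => b (u + k)) (σ + 1) := by
        congr 1 <;> omega
      have e0b : pfoldN (fun k => b (u + k)) (σ + 0 + 2) = pfoldN (fun k => b (u + k)) (σ + 2) := by
        congr 1 <;> omega
      have e1a : pfoldN (fun k => b (u + k)) (σ + 1 + 2) = pfoldN (fun k => b (u + k)) (σ + 3) := by
        congr 1 <;> omega
      have hp := pfold_odd_pair (fun k => b (u + k)) (hb2 0) (σ + 1) (by omega)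
      have e1b : pfoldN (fun k => b (u + k)) (σ + 1 + 1) = pfoldN (fun k => b (u + k)) (σ + 2) := by
        congr 1 <;> omega
      rw [e0a, e0b] at d0
      rw [e1b, e1a] at d1
      rw [e1a] at hp
      omega
    · have d1 := hdiff 1 (by omega)
      have d2 := hdiff 2 (by omega)
      have e1b : pfoldN (fun k => b (u + k)) (σ + 1 + 1) = pfoldN (fun k => b (u + k)) (σ + 2) := by
        congr 1 <;> omega
      have e1a : pfoldN (fun k => b (u + k)) (σ + 1 + 2) = pfoldN (fun k => b (u + k)) (σ + 3) := by
        congr 1 <;> omega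
      have e2b : pfoldN (fun k => b (u + k)) (σ + 2 + 1) = pfoldN (fun k => b (u + k)) (σ + 3) := by
        congr 1 <;> omega
      have e2a : pfoldN (fun k => b (u + k)) (σ + 2 + 2) = pfoldN (fun k => b (u + k)) (σ + 4) := by
        congr 1 <;> omega
      have hp := pfold_odd_pair (fun k => b (u + k)) (hb2 0) (σ + 2) (by omega)
      rw [e1b, e1a] at d1
      rw [e2b, e2a] at d2
      rw [e2a] at hp
      omega
  · -- g = 2^r, r ≥ 1 : the decimated word would have period 2^r on a long window
    have hgev : g % 2 = 0 := by
      have : (2:ℕ) ∣ 2 ^ r := dvd_pow_self 2 (by omega)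
      omega
    apply pfold_no_period r hrpos (fun k => b (u + k)) hb2 σ
    intro i hi
    have hig : i + g < N := by
      have : i < g := by rw [hgr]; exact hi
      omega
    have heq := h5 i hig
    rcases Nat.even_or_odd s with ⟨a, hsa⟩ | ⟨a, hsa⟩
    · have hodd : pfoldN (fun k => b (u - 1 + k)) (s + 2 * i + 1)
          = pfoldN (fun k => b (u - 1 + k)) (s + 2 * (i + g) + 1) :=
        pfold_odd_mod4 _ _ _ (by omega) (by omega) (by omega)
      have he1 : pfoldN (fun k => b (u - 1 + k)) (s + 2 * i + 2)
          = pfoldN (fun k => b (u + k)) (σ + 1 + i) := by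
        rw [show s + 2 * i + 2 = 2 * (σ + 1 + i) by omega]; exact hE _ (by omega)
      have he2 : pfoldN (fun k => b (u - 1 + k)) (s + 2 * (i + g) + 2)
          = pfoldN (fun k => b (u + k)) (σ + 1 + i + 2 ^ r) := by
        rw [show s + 2 * (i + g) + 2 = 2 * (σ + 1 + i + 2 ^ r) by rw [← hgr]; omega]
        exact hE _ (by positivity)
      omega
    · have hodd : pfoldN (fun k => b (u - 1 + k)) (s + 2 * i + 2)
          = pfoldN (fun k => b (u - 1 + k)) (s + 2 * (i + g) + 2) :=
        pfold_odd_mod4 _ _ _ (by omega) (by omega) (by omega)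
      have he1 : pfoldN (fun k => b (u - 1 + k)) (s + 2 * i + 1)
          = pfoldN (fun k => b (u + k)) (σ + 1 + i) := by
        rw [show s + 2 * i + 1 = 2 * (σ + 1 + i) by omega]; exact hE _ (by omega)
      have he2 : pfoldN (fun k => b (u - 1 + k)) (s + 2 * (i + g) + 1)
          = pfoldN (fun k => b (u + k)) (σ + 1 + i + 2 ^ r) := by
        rw [show s + 2 * (i + g) + 1 = 2 * (σ + 1 + i + 2 ^ r) by rw [← hgr]; omega]
        exact hE _ (by positivity)
      omega
end

section
/- Every paperfolding word contains abelian m-antipowers for every m ≥ 2: for every instruction sequence b with values in {−1,1} and every integer m ≥ 2, the paperfolding word f associated with b has a factor that is an abelian m-antipower. -/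
/-- The paperfolding word over `{0,1}` (here `Bool`, with `true` playing the
role of `1`) associated with the instruction sequence `b` (values in `{-1,1}`):
`f_i = 1` iff `i ≡ 2^k(2 + b_k) (mod 2^{k+2})`, where `k = ν₂(i)` is the
2-adic valuation of `i`. (The value at `i = 0` is irrelevant: factors only use
positions `i ≥ 1`.) -/
def pfold (b : ℕ → ℤ) (i : ℕ) : Bool :=
  decide ((i : ℤ) ≡ 2 ^ (padicValNat 2 i) * (2 + b (padicValNat 2 i))
    [ZMOD (2 ^ (padicValNat 2 i + 2))])

/-- `v` is a factor of the infinite word `w = w₁w₂⋯` (indexed from 1):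
`v = w_{ℓ+1} ⋯ w_{ℓ+n}` for some `ℓ ≥ 0`. -/
def IsFactor1 {A : Type*} (w : ℕ → A) (v : List A) : Prop :=
  ∃ ℓ : ℕ, v = (List.range v.length).map (fun j => w (ℓ + j + 1))

namespace APaux


/-- k-th binary digit of y -/
def bit (y k : ℕ) : ℕ := y / 2^k % 2

lemma bit_le (y k : ℕ) : bit y k ≤ 1 := by
  unfold bit
  omega

lemma bit_big {y k : ℕ} (h : y < 2^k) : bit y k = 0 := by
  unfold bit
  rw [Nat.div_eq_of_lt h]

lemma bit_def (y k : ℕ) : bit y k = y / 2^k % 2 := rfl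

/-- weighted digit-change sum -/
def S (η : ℕ → ℤ) (N y : ℕ) : ℤ :=
  ∑ k ∈ Finset.range N, if bit y k ≠ bit y (k+1) then η k else 0

lemma S_cut (η : ℕ → ℤ) {y N N' : ℕ} (h : y < 2^N) (h' : N ≤ N') :
    S η N' y = S η N y := by
  unfold S
  apply (Finset.sum_subset (Finset.range_subset_range.mpr h') ?_).symm
  intro k hk hk2
  simp only [Finset.mem_range] at hk hk2
  have hN : N ≤ k := by omega
  have h1 : y < 2^k := lt_of_lt_of_le h (Nat.pow_le_pow_right (by norm_num) hN)
  have h2 : y < 2^(k+1) := lt_of_lt_of_le h1 (Nat.pow_le_pow_right (by norm_num) (by omega))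
  rw [bit_big h1, bit_big h2]
  simp

lemma bit_pow_mul (c w k : ℕ) :
    bit (2^c * w) k = if k < c then 0 else bit w (k - c) := by
  unfold bit
  split_ifs with h
  · have hc : 2^c * w = 2^k * (2^(c-k) * w) := by
      rw [← mul_assoc, ← pow_add]
      congr 2
      omega
    rw [hc, Nat.mul_div_cancel_left _ (Nat.two_pow_pos k)]
    have h2 : 2^(c-k) * w = 2 * (2^(c-k-1) * w) := by
      rw [← mul_assoc]
      congr 1
      rw [← pow_succ']
      congr 1
      omega
    omega
  · have hk : (2:ℕ)^k = 2^c * 2^(k-c) := by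
      rw [← pow_add]
      congr 1
      omega
    rw [hk, ← Nat.div_div_eq_div_mul, Nat.mul_div_cancel_left _ (Nat.two_pow_pos c)]

lemma pred_split (P Q : ℕ) (hP : 1 ≤ P) (hQ : 1 ≤ Q) : P*Q - 1 = P*(Q-1) + (P-1) := by
  rw [Nat.mul_sub, mul_one]
  have : P ≤ P*Q := Nat.le_mul_of_pos_right P (by omega)
  omega

lemma pred_div_le {c w : ℕ} (k : ℕ) (hk : k ≤ c) (hw1 : 1 ≤ w) :
    (2^c*w - 1)/2^k = 2^(c-k)*w - 1 := by
  have e : 2^c * w = 2^k * (2^(c-k)*w) := by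
    rw [← mul_assoc, ← pow_add]
    congr 2
    omega
  have hQ : 1 ≤ 2^(c-k)*w := Nat.mul_pos (Nat.two_pow_pos _) (by omega)
  have hP : 1 ≤ (2:ℕ)^k := Nat.one_le_two_pow
  rw [e, pred_split _ _ hP hQ, Nat.mul_add_div (by omega), Nat.div_eq_of_lt (by omega)]
  omega

lemma bit_pow_mul_pred (c w k : ℕ) (hw : w % 2 = 1) :
    bit (2^c * w - 1) k = if k < c then 1 else if k = c then 0 else bit w (k - c) := by
  have hw1 : 1 ≤ w := by omega
  unfold bit
  split_ifs with h h2
  · rw [pred_div_le k (by omega) hw1]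
    have h2 : 2^(c-k) * w = 2 * (2^(c-k-1) * w) := by
      rw [← mul_assoc]
      congr 1
      rw [← pow_succ']
      congr 1
      omega
    have : 1 ≤ 2^(c-k-1)*w := Nat.mul_pos (Nat.two_pow_pos _) (by omega)
    omega
  · rw [h2, pred_div_le c (le_refl c) hw1]
    simp only [Nat.sub_self, pow_zero, one_mul]
    omega
  · -- k > c
    have hkc : c < k := by omega
    obtain ⟨t, rfl⟩ : ∃ t, w = 2*t+1 := ⟨w/2, by omega⟩
    have e1 : 2^c * (2*t+1) - 1 = 2^(c+1) * t + (2^c - 1) := by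
      have hP : 1 ≤ (2:ℕ)^c := Nat.one_le_two_pow
      rw [pow_succ]
      ring_nf
      rw [mul_comm]
      omega
    have e2 : (2:ℕ)^k = 2^(c+1) * 2^(k-c-1) := by
      rw [← pow_add]
      congr 1
      omega
    have hlt : (2:ℕ)^c - 1 < 2^(c+1) := by
      have : (2:ℕ)^c < 2^(c+1) := Nat.pow_lt_pow_succ (by norm_num)
      omega
    have L1 : (2^(c+1)*t + (2^c - 1))/2^(c+1) = t := by
      rw [Nat.mul_add_div (Nat.two_pow_pos _), Nat.div_eq_of_lt hlt]
      omega
    have e3 : (2:ℕ)^(k-c) = 2 * 2^(k-c-1) := by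
      rw [← pow_succ']
      congr 1
      omega
    have h2t : (2*t+1)/2 = t := by omega
    rw [e1, e2, ← Nat.div_div_eq_div_mul, L1, e3, ← Nat.div_div_eq_div_mul, h2t]



lemma S_step (η : ℕ → ℤ) (c w N : ℕ) (hw : w % 2 = 1) (hN : 2^c * w ≤ N) :
    S η N (2^c*w) = S η N (2^c*w - 1) + η c * (1 - 2 * (bit w 1 : ℤ)) := by
  have hw1 : 1 ≤ w := by omega
  have hcN : c < N := by
    have h1 : c < 2^c := (Nat.lt_two_pow_self (n := c))
    have h2 : 2^c ≤ 2^c * w := Nat.le_mul_of_pos_right _ (by omega)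
    omega
  have hb0 : bit w 0 = 1 := by rw [bit_def]; simpa using hw
  have key : ∀ k ∈ Finset.range N,
      (if bit (2^c*w) k ≠ bit (2^c*w) (k+1) then η k else 0)
      = (if bit (2^c*w-1) k ≠ bit (2^c*w-1) (k+1) then η k else 0)
        + (if k = c then η c * (1 - 2 * (bit w 1 : ℤ)) else 0) := by
    intro k _
    rcases lt_trichotomy k c with hk | hk | hk
    · rw [bit_pow_mul, bit_pow_mul, bit_pow_mul_pred _ _ _ hw, bit_pow_mul_pred _ _ _ hw]
      have hkc : ¬(k = c) := by omega
      by_cases hk1 : k+1 < c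
      · simp [hk, hk1, hkc]
      · have hk1c : k+1 = c := by omega
        have e0 : k+1-c = 0 := by omega
        simp [hk, hk1, hkc, hk1c, e0, hb0]
    · subst hk
      rw [bit_pow_mul, bit_pow_mul, bit_pow_mul_pred _ _ _ hw, bit_pow_mul_pred _ _ _ hw]
      have e1 : k+1-k = 1 := by omega
      have h1 : ¬(k < k) := lt_irrefl k
      have h2 : ¬(k+1 < k) := by omega
      have h3 : ¬(k+1 = k) := by omega
      simp only [if_neg h1, if_neg h2, if_neg h3, if_pos rfl, Nat.sub_self, e1, hb0]
      rcases Nat.le_one_iff_eq_zero_or_eq_one.mp (bit_le w 1) with h | h <;> rw [h] <;> norm_num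
    · have h1 : ¬(k < c) := by omega
      have h2 : ¬(k+1 < c) := by omega
      have h3 : ¬(k = c) := by omega
      have h4 : ¬(k+1 = c) := by omega
      have e1 : k+1-c = (k-c)+1 := by omega
      rw [bit_pow_mul, bit_pow_mul, bit_pow_mul_pred _ _ _ hw, bit_pow_mul_pred _ _ _ hw,
        if_neg h1, if_neg h2, if_neg h1, if_neg h3, if_neg h2, if_neg h4, if_neg h3, e1]
      simp
  unfold S
  rw [Finset.sum_congr rfl key, Finset.sum_add_distrib, Finset.sum_ite_eq' (Finset.range N) c,
    if_pos (Finset.mem_range.mpr hcN)]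

def tb (x : Bool) : ℤ := if x then 1 else 0

lemma tb_decide (P : Prop) [Decidable P] : tb (decide P) = if P then 1 else 0 := by
  by_cases h : P <;> simp [h, tb]

lemma pf_val (b : ℕ → ℤ) (hb : ∀ k, b k = 1 ∨ b k = -1) (c w : ℕ) (hw : w % 2 = 1) :
    2 * tb (pfold b (2^c * w)) - 1 = (-(b c)) * (1 - 2 * (bit w 1 : ℤ)) := by
  haveI : Fact (Nat.Prime 2) := ⟨Nat.prime_two⟩
  have hw0 : w ≠ 0 := by omega
  have hpv : padicValNat 2 (2^c * w) = c := by
    rw [padicValNat.mul (by positivity) hw0, padicValNat.prime_pow,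
        padicValNat.eq_zero_of_not_dvd (by omega), add_zero]
  unfold pfold
  rw [hpv, tb_decide]
  have key : (((2^c*w : ℕ) : ℤ) ≡ 2^c*(2 + b c) [ZMOD 2^(c+2)]) ↔ (4:ℤ) ∣ ((2 + b c) - w) := by
    rw [Int.modEq_iff_dvd]
    push_cast
    rw [show (2:ℤ)^c*(2+b c) - (2:ℤ)^c*w = 2^c*((2 + b c) - w) from by ring,
        show ((2:ℤ)^(c+2)) = 2^c * 4 from by ring]
    exact mul_dvd_mul_iff_left (show ((2:ℤ)^c) ≠ 0 from by positivity)
  simp only [key]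
  have h4 : w % 4 = 1 ∨ w % 4 = 3 := by omega
  have hbit : bit w 1 = w % 4 / 2 := by rw [bit_def]; omega
  rcases hb c with h1 | h1 <;> rw [h1] <;> rcases h4 with h4 | h4
  · rw [if_neg (show ¬((4:ℤ) ∣ 2 + 1 - (w:ℤ)) from by omega), hbit, h4]
    norm_num
  · rw [if_pos (show ((4:ℤ) ∣ 2 + 1 - (w:ℤ)) from by omega), hbit, h4]
    norm_num
  · rw [if_pos (show ((4:ℤ) ∣ 2 + -1 - (w:ℤ)) from by omega), hbit, h4]
    norm_num
  · rw [if_neg (show ¬((4:ℤ) ∣ 2 + -1 - (w:ℤ)) from by omega), hbit, h4]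
    norm_num

noncomputable def Dd (b : ℕ → ℤ) (n : ℕ) : ℤ := S (fun k => -(b k)) (n+1) n

lemma odd_decomp : ∀ n : ℕ, n ≠ 0 → ∃ c w, n = 2^c * w ∧ w % 2 = 1 := by
  intro n
  induction n using Nat.strong_induction_on with
  | _ n ih =>
    intro hn
    rcases Nat.even_or_odd n with he | ho
    · obtain ⟨t, ht⟩ := he
      obtain ⟨c, w, h1, h2⟩ := ih t (by omega) (by omega)
      exact ⟨c+1, w, by rw [ht, h1, pow_succ]; ring, h2⟩
    · exact ⟨0, n, by simp, Nat.odd_iff.mp ho⟩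

lemma Dd_step (b : ℕ → ℤ) (hb : ∀ k, b k = 1 ∨ b k = -1) (n : ℕ) :
    Dd b (n+1) = Dd b n + (2 * tb (pfold b (n+1)) - 1) := by
  obtain ⟨c, w, hcw, hw⟩ := odd_decomp (n+1) (by omega)
  have h1 : Dd b (n+1) = S (fun k => -(b k)) (n+2) (n+1) := rfl
  have h2 : Dd b n = S (fun k => -(b k)) (n+2) n := by
    unfold Dd
    refine (S_cut _ ?_ (by omega)).symm
    calc n < 2^n := (Nat.lt_two_pow_self (n := n))
    _ ≤ 2^(n+1) := Nat.pow_le_pow_right (by norm_num) (by omega)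
  have hn : n = 2^c * w - 1 := by omega
  have hcw1 : 1 ≤ 2^c * w := by omega
  rw [h1, h2, hcw, hn, pf_val b hb c w hw]
  exact S_step _ c w _ hw (by omega)

noncomputable def cnt (b : ℕ → ℤ) (x : ℕ) : ℤ := ∑ t ∈ Finset.range x, tb (pfold b (t+1))

lemma cnt_eq (b : ℕ → ℤ) (hb : ∀ k, b k = 1 ∨ b k = -1) (x : ℕ) :
    2 * cnt b x = x + Dd b x := by
  induction x with
  | zero =>
    have : Dd b 0 = 0 := by
      unfold Dd S
      simp [bit_big (show (0:ℕ) < 2^0 by norm_num), bit_big (show (0:ℕ) < 2^1 by norm_num)]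
    simp [cnt, this]
  | succ n ih =>
    have : cnt b (n+1) = cnt b n + tb (pfold b (n+1)) := Finset.sum_range_succ _ n
    rw [this, Dd_step b hb n]
    push_cast
    linarith



lemma Dd_zero (b : ℕ → ℤ) : Dd b 0 = 0 := by
  unfold Dd S
  simp [bit_big (show (0:ℕ) < 2^0 by norm_num), bit_big (show (0:ℕ) < 2^1 by norm_num)]

/-- weighted digit-change sum with bottom boundary term -/
noncomputable def Bt (τ : ℕ → ℤ) (y : ℕ) : ℤ :=
  (if bit y 0 = 1 then τ 0 else 0) + S (fun k => τ (k+1)) (y+1) y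

lemma Bt_zero (τ : ℕ → ℤ) : Bt τ 0 = 0 := by
  unfold Bt S
  simp [bit_big (show (0:ℕ) < 2^0 by norm_num), bit_big (show (0:ℕ) < 2^1 by norm_num)]

lemma gt_eval (τ : ℕ → ℤ) (c w : ℕ) (hw : w % 2 = 1) :
    Bt τ (2^c*w) - Bt τ (2^c*w - 1)
      = (if c = 0 then τ 0 else -(τ 0)) + τ (c+1) * (1 - 2*(bit w 1 : ℤ)) := by
  have hw1 : 1 ≤ w := by omega
  have hn1 : 1 ≤ 2^c*w := Nat.mul_pos (Nat.two_pow_pos _) (by omega)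
  have hb0 : bit w 0 = 1 := by rw [bit_def]; simpa using hw
  unfold Bt
  have hcut : S (fun k => τ (k+1)) ((2^c*w - 1)+1) (2^c*w - 1)
      = S (fun k => τ (k+1)) (2^c*w+1) (2^c*w - 1) := by
    refine (S_cut _ ?_ (by omega)).symm
    calc 2^c*w - 1 < 2^(2^c*w - 1) := (Nat.lt_two_pow_self (n := _))
    _ ≤ 2^(2^c*w - 1 + 1) := Nat.pow_le_pow_right (by norm_num) (by omega)
  rw [hcut, S_step (fun k => τ (k+1)) c w _ hw (by omega)]
  by_cases hc : c = 0
  · subst hc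
    have e1 : bit (2^0*w) 0 = 1 := by rw [bit_pow_mul]; simpa using hb0
    have e2 : bit (2^0*w - 1) 0 = 0 := by rw [bit_pow_mul_pred _ _ _ hw]; simp
    rw [e1, e2, if_pos rfl, if_neg (show ¬(0 = 1) from by omega), if_pos rfl]
    ring
  · have e1 : bit (2^c*w) 0 = 0 := by rw [bit_pow_mul, if_pos (by omega)]
    have e2 : bit (2^c*w - 1) 0 = 1 := by rw [bit_pow_mul_pred _ _ _ hw, if_pos (by omega)]
    rw [e1, e2, if_neg (show ¬(0 = 1) from by omega), if_pos rfl, if_neg hc]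
    ring

lemma gt_bound (τ : ℕ → ℤ) (hτ : ∀ r, τ r = 1 ∨ τ r = -1) (y : ℕ) :
    |Bt τ (y+1) - Bt τ y| ≤ 2 := by
  obtain ⟨c, w, hcw, hw⟩ := odd_decomp (y+1) (by omega)
  have hy : y = 2^c*w - 1 := by omega
  have e : Bt τ (y+1) - Bt τ y
      = (if c = 0 then τ 0 else -(τ 0)) + τ (c+1) * (1 - 2*(bit w 1 : ℤ)) := by
    rw [hcw, hy]
    exact gt_eval τ c w hw
  rw [e]
  have hA : |(if c = 0 then τ 0 else -(τ 0))| ≤ 1 := by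
    rcases hτ 0 with h0|h0 <;> by_cases hc : c = 0 <;> simp [hc, h0]
  have hB : |τ (c+1)| ≤ 1 := by rcases hτ (c+1) with h1|h1 <;> simp [h1]
  have hC : |1 - 2*(bit w 1 : ℤ)| ≤ 1 := by
    rcases Nat.le_one_iff_eq_zero_or_eq_one.mp (bit_le w 1) with h2|h2 <;> rw [h2] <;> norm_num
  have hBC : |τ (c+1) * (1 - 2*(bit w 1 : ℤ))| ≤ 1 := by
    rw [abs_mul]
    calc |τ (c+1)| * |1 - 2*(bit w 1 : ℤ)| ≤ 1 * 1 :=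
      mul_le_mul hB hC (abs_nonneg _) (by norm_num)
    _ = 1 := by norm_num
  calc |(if c = 0 then τ 0 else -(τ 0)) + τ (c+1) * (1 - 2*(bit w 1 : ℤ))|
      ≤ |(if c = 0 then τ 0 else -(τ 0))| + |τ (c+1) * (1 - 2*(bit w 1 : ℤ))| := abs_add_le _ _
  _ ≤ 2 := by linarith

lemma Bt_cong {τ τ' : ℕ → ℤ} {L y : ℕ} (hy : y < 2^L) (h : ∀ r, r ≤ L → τ r = τ' r) :
    Bt τ y = Bt τ' y := by
  unfold Bt
  rw [h 0 (by omega)]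
  congr 1
  unfold S
  refine Finset.sum_congr rfl ?_
  intro k _
  by_cases hcnd : bit y k ≠ bit y (k+1)
  · simp only [if_pos hcnd]
    have h2k : 2^k ≤ y := by
      by_contra hcc
      rw [bit_big (by omega), bit_big (show y < 2^(k+1) by
        have : (2:ℕ)^k ≤ 2^(k+1) := Nat.pow_le_pow_right (by norm_num) (by omega)
        omega)] at hcnd
      exact hcnd rfl
    have hkL : k < L := by
      have : (2:ℕ)^k < 2^L := by omega
      exact (Nat.pow_lt_pow_iff_right (by norm_num)).mp this
    simp only [h (k+1) (by omega)]
  · rw [if_neg hcnd, if_neg hcnd]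

lemma Dsplit (b : ℕ → ℤ) {a x : ℕ} (ha : 1 ≤ a) (hx : x < 2^(a-1)) (y : ℕ) :
    Dd b (x + 2^a * y) = Dd b x + Bt (fun r => -(b (a - 1 + r))) y := by
  rcases Nat.eq_zero_or_pos y with hy | hy
  · simp [hy, Bt_zero]
  have hxa : x < 2^a := lt_of_lt_of_le hx (Nat.pow_le_pow_right (by norm_num) (by omega))
  have hbitn : ∀ k, bit (x + 2^a*y) k = if k < a then bit x k else bit y (k-a) := by
    intro k
    by_cases hk : k < a
    · rw [if_pos hk, bit_def, bit_def,
        show 2^a*y = 2^k*(2^(a-k)*y) from by rw [← mul_assoc, ← pow_add]; congr 2; omega,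
        Nat.add_mul_div_left _ _ (Nat.two_pow_pos _)]
      have e2 : 2^(a-k)*y = 2*(2^(a-k-1)*y) := by
        rw [← mul_assoc]; congr 1
        rw [← pow_succ']; congr 1; omega
      omega
    · rw [if_neg hk, bit_def, bit_def,
        show (2:ℕ)^k = 2^a * 2^(k-a) from by rw [← pow_add]; congr 1; omega,
        ← Nat.div_div_eq_div_mul, Nat.add_mul_div_left _ _ (Nat.two_pow_pos _),
        Nat.div_eq_of_lt hxa, zero_add]
  have h2a : a + 1 ≤ 2^a := by
    have := (Nat.lt_two_pow_self (n := a))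
    omega
  have hay : a + y ≤ x + 2^a*y := by
    have h5 : (a+1)*y ≤ 2^a*y := Nat.mul_le_mul_right y h2a
    have h6 : a*1 ≤ a*y := Nat.mul_le_mul_left a hy
    have h7 : (a+1)*y = a*y + y := by ring
    omega
  set n := x + 2^a*y with hn
  set η : ℕ → ℤ := fun k => -(b k) with hη
  have hDd : Dd b n = S η (n+1) n := rfl
  -- split the sum
  have hsplit : S η (n+1) n
      = (∑ k ∈ Finset.Ico 0 (a-1), if bit n k ≠ bit n (k+1) then η k else 0)
      + (∑ k ∈ Finset.Ico (a-1) a, if bit n k ≠ bit n (k+1) then η k else 0)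
      + (∑ k ∈ Finset.Ico a (n+1), if bit n k ≠ bit n (k+1) then η k else 0) := by
    unfold S
    rw [Finset.range_eq_Ico, ← Finset.sum_Ico_consecutive _ (by omega : 0 ≤ a) (by omega : a ≤ n+1),
      ← Finset.sum_Ico_consecutive _ (by omega : 0 ≤ a-1) (by omega : a-1 ≤ a)]
  -- piece 1
  have hp1 : (∑ k ∈ Finset.Ico 0 (a-1), if bit n k ≠ bit n (k+1) then η k else 0) = Dd b x := by
    have e : ∀ k ∈ Finset.Ico 0 (a-1), (if bit n k ≠ bit n (k+1) then η k else 0)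
        = (if bit x k ≠ bit x (k+1) then η k else 0) := by
      intro k hk
      simp only [Finset.mem_Ico] at hk
      rw [hbitn, hbitn, if_pos (show k < a from by omega), if_pos (show k + 1 < a from by omega)]
    rw [Finset.sum_congr rfl e]
    have e2 : (∑ k ∈ Finset.Ico 0 (a-1), if bit x k ≠ bit x (k+1) then η k else 0) = S η (a-1) x := by
      unfold S
      rw [Finset.range_eq_Ico]
    rw [e2]
    unfold Dd
    have h1 : S η ((a-1) + (x+1)) x = S η (a-1) x :=
      S_cut η (lt_of_lt_of_le hx (Nat.pow_le_pow_right (by norm_num) (by omega))) (by omega)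
    have h2 : S η ((a-1) + (x+1)) x = S η (x+1) x := by
      refine S_cut η ?_ (by omega)
      calc x < 2^x := (Nat.lt_two_pow_self (n := x))
      _ ≤ 2^(x+1) := Nat.pow_le_pow_right (by norm_num) (by omega)
    rw [← h1, h2]
  -- piece 2
  have hp2 : (∑ k ∈ Finset.Ico (a-1) a, if bit n k ≠ bit n (k+1) then η k else 0)
      = (if bit y 0 = 1 then (fun r => -(b (a - 1 + r))) 0 else 0) := by
    have ea : a = (a-1)+1 := by omega
    rw [Nat.Ico_pred_singleton (show 0 < a from by omega)]
    rw [Finset.sum_singleton]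
    have e1 : bit n (a-1) = bit x (a-1) := by rw [hbitn, if_pos (by omega)]
    have e2 : bit n ((a-1)+1) = bit y 0 := by
      rw [hbitn, if_neg (by omega)]
      congr 1
      omega
    rw [e1, e2, bit_big hx]
    rcases Nat.le_one_iff_eq_zero_or_eq_one.mp (bit_le y 0) with h|h <;>
      simp [h, hη, add_zero]
  -- piece 3
  have hp3 : (∑ k ∈ Finset.Ico a (n+1), if bit n k ≠ bit n (k+1) then η k else 0)
      = S (fun k => (fun r => -(b (a - 1 + r))) (k+1)) (y+1) y := by
    rw [Finset.sum_Ico_eq_sum_range]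
    have e : ∀ k ∈ Finset.range (n+1-a), (if bit n (a+k) ≠ bit n (a+k+1) then η (a+k) else 0)
        = (if bit y k ≠ bit y (k+1) then -(b (a-1+(k+1))) else 0) := by
      intro k _
      have e1 : bit n (a+k) = bit y k := by
        rw [hbitn, if_neg (show ¬(a + k < a) from by omega)]
        congr 1
        omega
      have e2 : bit n (a+k+1) = bit y (k+1) := by
        rw [hbitn, if_neg (show ¬(a + k + 1 < a) from by omega)]
        congr 1
        omega
      have ea : a - 1 + (k+1) = a + k := by omega
      rw [e1, e2, ea]
    rw [Finset.sum_congr rfl e]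
    have e3 : (∑ k ∈ Finset.range (n+1-a), if bit y k ≠ bit y (k+1) then -(b (a-1+(k+1))) else 0)
        = S (fun k => -(b (a-1+(k+1)))) (n+1-a) y := rfl
    rw [e3]
    refine S_cut _ ?_ (by omega)
    calc y < 2^y := (Nat.lt_two_pow_self (n := y))
    _ ≤ 2^(y+1) := Nat.pow_le_pow_right (by norm_num) (by omega)
  rw [hDd, hsplit, hp1, hp2, hp3]
  unfold Bt
  ring

lemma spread (b : ℕ → ℤ) (Lc : ℕ) (P V : ℕ → ℕ) (hP0 : 1 ≤ P 0)
    (hPg : ∀ i, P i + Lc + 1 ≤ P (i+1)) :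
    ∀ T, (∀ i, i < T → V i < 2^Lc) →
      (∑ i ∈ Finset.range T, 2^(P i) * V i) < 2^(P T - 1) ∧
      Dd b (∑ i ∈ Finset.range T, 2^(P i) * V i)
        = ∑ i ∈ Finset.range T, Bt (fun r => -(b (P i - 1 + r))) (V i) := by
  have hPmono : ∀ i, 1 ≤ P i := by
    intro i
    induction i with
    | zero => exact hP0
    | succ n ih => have := hPg n; omega
  intro T
  induction T with
  | zero =>
    intro _
    constructor
    · simp
    · simp [Dd_zero]
  | succ T ih =>
    intro hV
    obtain ⟨ihb, ihd⟩ := ih (fun i hi => hV i (by omega))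
    have hVT := hV T (by omega)
    constructor
    · rw [Finset.sum_range_succ]
      have c1 : (2:ℕ)^(P T - 1) ≤ 2^(P T) := Nat.pow_le_pow_right (by norm_num) (by omega)
      have c2 : 2^(P T)*(V T + 1) ≤ 2^(P T)*2^Lc := Nat.mul_le_mul_left _ hVT
      have c3 : (2:ℕ)^(P T)*2^Lc = 2^(P T + Lc) := (pow_add 2 _ _).symm
      have c4 : (2:ℕ)^(P T + Lc) ≤ 2^(P (T+1) - 1) := by
        refine Nat.pow_le_pow_right (by norm_num) ?_
        have := hPg T
        omega
      have c5 : 2^(P T)*(V T+1) = 2^(P T)*V T + 2^(P T) := by ring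
      have c6 : (1:ℕ) ≤ 2^(P T) := Nat.one_le_two_pow
      omega
    · rw [Finset.sum_range_succ, Finset.sum_range_succ, Dsplit b (hPmono T) ihb (V T), ihd]

/-- partial sums of 17^i -/
def ps (ℓ : ℕ) : ℕ := ∑ i ∈ Finset.range ℓ, 17^i

lemma ps_succ (ℓ : ℕ) : ps (ℓ+1) = ps ℓ + 17^ℓ := Finset.sum_range_succ _ _

lemma ps_ge (ℓ : ℕ) : ℓ ≤ ps ℓ := by
  induction ℓ with
  | zero => simp [ps]
  | succ n ih =>
    rw [ps_succ]
    have : (1:ℕ) ≤ 17^n := Nat.one_le_pow _ _ (by norm_num)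
    omega

lemma ps_mono {a c : ℕ} (h : a ≤ c) : ps a ≤ ps c := by
  unfold ps
  exact Finset.sum_le_sum_of_subset (Finset.range_subset_range.mpr h)

def off (i : ℕ) : ℕ := ((Finset.range (i+1)).filter (fun ℓ => ps (ℓ+1) ≤ i)).card

lemma off_eq {ℓ u : ℕ} (hu : u < 17^ℓ) : off (ps ℓ + u) = ℓ := by
  unfold off
  have hfil : (Finset.range (ps ℓ + u + 1)).filter (fun ℓ' => ps (ℓ'+1) ≤ ps ℓ + u)
      = Finset.range ℓ := by
    ext ℓ'
    simp only [Finset.mem_filter, Finset.mem_range]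
    constructor
    · rintro ⟨h1, h2⟩
      by_contra hc
      have h3 : ps (ℓ+1) ≤ ps (ℓ'+1) := ps_mono (by omega)
      rw [ps_succ] at h3
      omega
    · intro h
      have h2 : ps (ℓ'+1) ≤ ps ℓ := ps_mono (by omega)
      have h3 : ℓ' ≤ ps ℓ' := ps_ge ℓ'
      have h4 := ps_succ ℓ'
      have h5 : (1:ℕ) ≤ 17^ℓ' := Nat.one_le_pow _ _ (by norm_num)
      omega
  rw [hfil, Finset.card_range]

lemma off_lt : ∀ (Om i : ℕ), i < ps Om → off i < Om := by
  intro Om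
  induction Om with
  | zero =>
    intro i h
    simp [ps] at h
  | succ n ih =>
    intro i h
    rw [ps_succ] at h
    by_cases hi : i < ps n
    · have := ih i hi
      omega
    · have he : i = ps n + (i - ps n) := by omega
      have : off i = n := by rw [he]; exact off_eq (by omega)
      omega

lemma sum_range_add' (G : ℕ → ℤ) (a c : ℕ) :
    ∑ i ∈ Finset.range (a+c), G i
      = ∑ i ∈ Finset.range a, G i + ∑ u ∈ Finset.range c, G (a+u) := by
  induction c with
  | zero => simp
  | succ n ih =>
    rw [show a + (n+1) = (a+n)+1 from by omega, Finset.sum_range_succ, ih, Finset.sum_range_succ]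
    ring

lemma reindex (G : ℕ → ℤ) (Ω : ℕ) :
    ∑ i ∈ Finset.range (ps Ω), G (off i) = ∑ ℓ ∈ Finset.range Ω, (17^ℓ : ℤ) * G ℓ := by
  induction Ω with
  | zero => simp [ps]
  | succ n ih =>
    rw [ps_succ, sum_range_add' _ _ _, ih, Finset.sum_range_succ]
    congr 1
    have e : ∀ u ∈ Finset.range (17^n), G (off (ps n + u)) = G n := by
      intro u hu
      rw [off_eq (Finset.mem_range.mp hu)]
    rw [Finset.sum_congr rfl e, Finset.sum_const, Finset.card_range]
    push_cast [nsmul_eq_mul]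
    ring

lemma geom_bound : ∀ n : ℕ, 4 * ∑ ℓ ∈ Finset.range n, (17:ℤ)^ℓ ≤ 17^n - 1 := by
  intro n
  induction n with
  | zero => simp
  | succ n ih =>
    rw [Finset.sum_range_succ, pow_succ]
    have : (0:ℤ) < 17^n := by positivity
    linarith

lemma abs_sum_bound (δ : ℕ → ℤ) (hδ : ∀ ℓ, |δ ℓ| ≤ 4) (n : ℕ) :
    |∑ ℓ ∈ Finset.range n, 17^ℓ * δ ℓ| ≤ 17^n - 1 := by
  calc |∑ ℓ ∈ Finset.range n, 17^ℓ * δ ℓ| ≤ ∑ ℓ ∈ Finset.range n, |17^ℓ * δ ℓ| :=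
        Finset.abs_sum_le_sum_abs _ _
  _ ≤ ∑ ℓ ∈ Finset.range n, (17:ℤ)^ℓ * 4 := by
      refine Finset.sum_le_sum ?_
      intro ℓ _
      rw [abs_mul, abs_of_nonneg (show (0:ℤ) ≤ 17^ℓ from by positivity)]
      exact mul_le_mul_of_nonneg_left (hδ ℓ) (by positivity)
  _ = 4 * ∑ ℓ ∈ Finset.range n, (17:ℤ)^ℓ := by
      rw [← Finset.sum_mul, mul_comm]
  _ ≤ 17^n - 1 := geom_bound n

lemma digits_zero (δ : ℕ → ℤ) (hδ : ∀ ℓ, |δ ℓ| ≤ 4) :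
    ∀ Ω, (∑ ℓ ∈ Finset.range Ω, 17^ℓ * δ ℓ) = 0 → ∀ ℓ < Ω, δ ℓ = 0 := by
  intro Ω
  induction Ω with
  | zero =>
    intro _ ℓ hℓ
    omega
  | succ n ih =>
    intro h0 ℓ hℓ
    rw [Finset.sum_range_succ] at h0
    have hb := abs_sum_bound δ hδ n
    have h17 : (0:ℤ) < 17^n := by positivity
    have hδn : δ n = 0 := by
      by_contra hc
      have h1 : 1 ≤ |δ n| := Int.one_le_abs (by omega)
      have h2 : (17:ℤ)^n * 1 ≤ 17^n * |δ n| := mul_le_mul_of_nonneg_left h1 (le_of_lt h17)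
      have h3 : |(17:ℤ)^n * δ n| = 17^n * |δ n| := by
        rw [abs_mul, abs_of_nonneg (le_of_lt h17)]
      have h4 : |(17:ℤ)^n * δ n| ≤ 17^n - 1 := by
        have e : (17:ℤ)^n * δ n = -(∑ ℓ ∈ Finset.range n, 17^ℓ * δ ℓ) := by linarith
        rw [e, abs_neg]
        exact hb
      rw [h3] at h4
      linarith
    rcases Nat.lt_succ_iff_lt_or_eq.mp hℓ with h | h
    · refine ih ?_ ℓ h
      rw [hδn] at h0
      linarith
    · rw [h]
      exact hδn

lemma bit1_add4 (q t : ℕ) : bit (q + 4*t) 1 = bit q 1 := by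
  rw [bit_def, bit_def]
  have : (2:ℕ)^1 = 2 := by norm_num
  rw [this]
  omega


lemma count_block (b : ℕ → ℤ) (x : ℕ) : ∀ n : ℕ,
    (((List.range n).map (fun t => pfold b (x + t + 1))).count true : ℤ)
      = cnt b (x + n) - cnt b x := by
  intro n
  induction n with
  | zero => simp
  | succ n ih =>
    rw [List.range_succ, List.map_append, List.count_append]
    push_cast
    rw [ih]
    have hstep : cnt b (x + (n+1)) = cnt b (x+n) + tb (pfold b (x+n+1)) := by
      have h := Finset.sum_range_succ (fun t => tb (pfold b (t+1))) (x+n)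
      have e : x + (n+1) = (x+n)+1 := by omega
      rw [e]
      exact h
    rw [show x + (n+1) = x + n + 1 from by omega] at hstep ⊢
    rw [hstep]
    have : (([pfold b (x + n + 1)].count true : ℤ)) = tb (pfold b (x + n + 1)) := by
      by_cases h : pfold b (x+n+1) = true <;> simp [h, tb]
    simp only [List.map_cons, List.map_nil] at *
    rw [this]
    ring

lemma chunks_flatten (F : ℕ → Bool) (d : ℕ) : ∀ M : ℕ,
    ((List.range M).map (fun j => (List.range d).map (fun t => F (j*d + t)))).flatten
      = (List.range (M*d)).map F := by
  intro M
  induction M with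
  | zero => simp
  | succ M ih =>
    rw [List.range_succ, List.map_append, List.flatten_append, ih,
      show (M+1)*d = M*d + d from by ring, List.range_add, List.map_append]
    simp [Function.comp]

end APaux

set_option maxHeartbeats 1000000 in
/-- Every paperfolding word contains abelian `m`-antipowers for every `m ≥ 2`. -/
theorem pfold_contains_abelian_antipowers
    (b : ℕ → ℤ) (hb : ∀ k, b k = 1 ∨ b k = -1) :
    ∀ m : ℕ, 2 ≤ m →
      ∃ v : List Bool, IsFactor1 (pfold b) v ∧ IsAbelianAntipower m v := by
  classical
  open APaux in
  intro m hm
  set L := 2*m+6 with hL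
  set Ω := 2^(2*m+3) with hOm
  -- pigeonhole: infinitely many windows of length L+1 with the same sign pattern
  let φ : ℕ → (Fin (L+1) → Bool) := fun n r => decide (b (n + (r:ℕ)) = 1)
  obtain ⟨pat, hpat⟩ := Finite.exists_infinite_fiber φ
  have hAinf : (φ ⁻¹' {pat}).Infinite := Set.infinite_coe_iff.mp hpat
  have hnext : ∀ n:ℕ, ∃ k, k ∈ φ ⁻¹' {pat} ∧ n < k := by
    intro n
    obtain ⟨k, h1, h2⟩ := hAinf.exists_gt n
    exact ⟨k, h1, h2⟩
  choose F hF1 hF2 using hnext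
  -- sparse block positions with constant window pattern
  let pos : ℕ → ℕ := fun i => Nat.rec (F 0 + 1) (fun _ p => F (p + L) + 1) i
  have pos_succ : ∀ i, pos (i+1) = F (pos i + L) + 1 := fun i => rfl
  have hpos1 : ∀ i, 1 ≤ pos i := by
    intro i
    cases i with
    | zero => show 1 ≤ F 0 + 1; omega
    | succ n => rw [pos_succ]; omega
  have hposA : ∀ i, (pos i - 1) ∈ φ ⁻¹' {pat} := by
    intro i
    cases i with
    | zero => show (F 0 + 1 - 1) ∈ _; simpa using hF1 0
    | succ n => rw [pos_succ]; simpa using hF1 _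
  have hgap : ∀ i, pos i + L + 1 ≤ pos (i+1) := by
    intro i
    have := hF2 (pos i + L)
    rw [pos_succ]
    omega
  -- the common weight window
  set τ : ℕ → ℤ := fun r => -(b ((pos 0 - 1) + r)) with hτdef
  have hτpm : ∀ r, τ r = 1 ∨ τ r = -1 := by
    intro r
    rcases hb ((pos 0 - 1) + r) with h | h
    · right; show -(b _) = -1; rw [h]
    · left; show -(b _) = 1; rw [h]; ring
  have hwin : ∀ i r, r ≤ L → -(b ((pos i - 1) + r)) = τ r := by
    intro i r hr
    have h1 := hposA i
    have h2 := hposA 0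
    simp only [Set.mem_preimage, Set.mem_singleton_iff] at h1 h2
    have h3 := congrFun (h1.trans h2.symm) ⟨r, by omega⟩
    simp only [φ] at h3
    have hiff : (b ((pos i - 1) + r) = 1) ↔ (b ((pos 0 - 1) + r) = 1) :=
      decide_eq_decide.mp h3
    show -(b _) = -(b _)
    rcases hb ((pos i - 1) + r) with ha | ha <;> rcases hb ((pos 0 - 1) + r) with hc | hc
    · rw [ha, hc]
    · exfalso; have := hiff.mp ha; omega
    · exfalso; have := hiff.mpr hc; omega
    · rw [ha, hc]
  -- block data
  set T := ps Ω with hT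
  set d := ∑ i ∈ Finset.range T, 2^(pos i) with hd
  set lst := ∑ i ∈ Finset.range T, 2^(pos i) * off i with hlst
  have hdpos : 0 < d := by
    rw [hd]
    apply Finset.sum_pos
    · intro i _; exact Nat.two_pow_pos _
    · refine ⟨0, Finset.mem_range.mpr ?_⟩
      have h1 : (1:ℕ) ≤ Ω := Nat.one_le_two_pow
      have := ps_ge Ω
      omega
  have hΩL : Ω + m < 2^L := by
    have h1 : m < 2^m := (Nat.lt_two_pow_self (n := m))
    have h2 : (2:ℕ)^m ≤ 2^(2*m+3) := Nat.pow_le_pow_right (by norm_num) (by omega)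
    have h3 : (2:ℕ)^(2*m+3) + 2^(2*m+3) = 2^(2*m+4) := by rw [pow_succ]; ring
    have h4 : (2:ℕ)^(2*m+4) ≤ 2^L := Nat.pow_le_pow_right (by norm_num) (by omega)
    omega
  have hoffΩ : ∀ i, i < T → off i < Ω := fun i hi => off_lt Ω i hi
  have hDx : ∀ j, j ≤ m → Dd b (lst + j*d) = ∑ ℓ ∈ Finset.range Ω, (17^ℓ:ℤ) * Bt τ (ℓ + j) := by
    intro j hj
    have hVb : ∀ i, i < T → off i + j < 2^L := by
      intro i hi
      have := hoffΩ i hi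
      omega
    have hx : lst + j*d = ∑ i ∈ Finset.range T, 2^(pos i) * (off i + j) := by
      rw [hlst, hd, Finset.mul_sum, ← Finset.sum_add_distrib]
      refine Finset.sum_congr rfl ?_
      intro i _
      ring
    rw [hx, (spread b L pos (fun i => off i + j) (hpos1 0) hgap T hVb).2]
    have hcong : ∀ i ∈ Finset.range T,
        Bt (fun r => -(b (pos i - 1 + r))) (off i + j) = Bt τ (off i + j) := by
      intro i hi
      exact Bt_cong (hVb i (Finset.mem_range.mp hi)) (fun r hr => hwin i r hr)
    rw [Finset.sum_congr rfl hcong]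
    exact reindex (fun ℓ => Bt τ (ℓ + j)) Ω
  -- the factor and its chunks
  refine ⟨(List.range (m*d)).map (fun t => pfold b (lst + t + 1)), ⟨lst, ?_⟩, ?_⟩
  · rw [List.length_map, List.length_range]
  · refine ⟨(List.range m).map
      (fun j => (List.range d).map (fun t => pfold b (lst + (j*d + t) + 1))), ?_, ?_,
      ⟨d, hdpos, ?_⟩, ?_⟩
    · rw [List.length_map, List.length_range]
    · exact chunks_flatten (fun t => pfold b (lst + t + 1)) d m
    · intro u hu
      simp only [List.mem_map, List.mem_range] at hu
      obtain ⟨j, _, rfl⟩ := hu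
      rw [List.length_map, List.length_range]
    · rw [List.pairwise_iff_getElem]
      intro i j hi hj hij
      simp only [List.length_map, List.length_range] at hi hj
      simp only [List.getElem_map, List.getElem_range]
      intro hpar
      -- equal counts of `true` in chunks i and j
      have hceq : ((List.range d).map (fun t => pfold b (lst + (i*d + t) + 1))).count true
          = ((List.range d).map (fun t => pfold b (lst + (j*d + t) + 1))).count true :=
        congrFun hpar true
      have hform : ∀ r : ℕ, ((List.range d).map (fun t => pfold b (lst + (r*d + t) + 1)))
          = ((List.range d).map (fun t => pfold b ((lst + r*d) + t + 1))) := by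
        intro r
        apply List.map_congr_left
        intro t _
        congr 1
        omega
      have hcc : ∀ r : ℕ,
          ((((List.range d).map (fun t => pfold b (lst + (r*d + t) + 1))).count true : ℤ))
          = cnt b (lst + r*d + d) - cnt b (lst + r*d) := by
        intro r
        rw [hform r]
        exact count_block b (lst + r*d) d
      have heq2 : cnt b (lst + i*d + d) - cnt b (lst + i*d)
          = cnt b (lst + j*d + d) - cnt b (lst + j*d) := by
        have hcast : (((List.range d).map (fun t => pfold b (lst + (i*d + t) + 1))).count true : ℤ)
            = (((List.range d).map (fun t => pfold b (lst + (j*d + t) + 1))).count true : ℤ) := by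
          exact_mod_cast hceq
        rw [hcc i, hcc j] at hcast
        exact hcast
      have hDdiff : Dd b (lst + (i+1)*d) - Dd b (lst + i*d)
          = Dd b (lst + (j+1)*d) - Dd b (lst + j*d) := by
        have e1 := cnt_eq b hb (lst + i*d + d)
        have e2 := cnt_eq b hb (lst + i*d)
        have e3 := cnt_eq b hb (lst + j*d + d)
        have e4 := cnt_eq b hb (lst + j*d)
        have er1 : lst + i*d + d = lst + (i+1)*d := by ring
        have er2 : lst + j*d + d = lst + (j+1)*d := by ring
        rw [er1] at e1
        rw [er2] at e3
        rw [er1, er2] at heq2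
        push_cast at e1 e2 e3 e4
        linarith
      -- set up the digit argument
      have hppos : j - i ≠ 0 := by omega
      obtain ⟨s, q, hpq, hq⟩ := odd_decomp (j-i) hppos
      have hq1 : 1 ≤ q := by omega
      have h2sp : 2^s ≤ j - i := by rw [hpq]; exact Nat.le_mul_of_pos_right _ (by omega)
      have hsm : s < m := by
        have h1 : (2:ℕ)^s < 2^m := by
          have : m < 2^m := (Nat.lt_two_pow_self (n := m))
          omega
        exact (Nat.pow_lt_pow_iff_right (by norm_num)).mp h1
      set c := s + (m+2) with hcdef
      have h2c : (2:ℕ)^c ≤ 2^(2*m+1) := Nat.pow_le_pow_right (by norm_num) (by omega)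
      have hic : i < 2^c := by
        have h1 : m < 2^m := (Nat.lt_two_pow_self (n := m))
        have h2 : (2:ℕ)^m ≤ 2^c := Nat.pow_le_pow_right (by norm_num) (by omega)
        omega
      set ℓ₁ := 2^c - 1 - i with hℓ₁def
      set ℓ₂ := 3*2^c - 1 - i with hℓ₂def
      have h4pow : (2:ℕ)^(2*m+3) = 4*2^(2*m+1) := by rw [show 2*m+3 = (2*m+1)+2 from by omega, pow_add]; ring
      have hℓ1 : ℓ₁ < Ω := by rw [hOm]; omega
      have hℓ2 : ℓ₂ < Ω := by rw [hOm]; omega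
      set δ : ℕ → ℤ := fun ℓ => (Bt τ (ℓ + (i+1)) - Bt τ (ℓ + i))
          - (Bt τ (ℓ + (j+1)) - Bt τ (ℓ + j)) with hδdef
      have hδb : ∀ ℓ, |δ ℓ| ≤ 4 := by
        intro ℓ
        have g1 := gt_bound τ hτpm (ℓ + i)
        have g2 := gt_bound τ hτpm (ℓ + j)
        have e1 : ℓ + (i+1) = (ℓ+i)+1 := by omega
        have e2 : ℓ + (j+1) = (ℓ+j)+1 := by omega
        simp only [hδdef, e1, e2]
        calc |(Bt τ ((ℓ+i)+1) - Bt τ (ℓ + i)) - (Bt τ ((ℓ+j)+1) - Bt τ (ℓ + j))|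
            ≤ |Bt τ ((ℓ+i)+1) - Bt τ (ℓ + i)| + |Bt τ ((ℓ+j)+1) - Bt τ (ℓ + j)| := abs_sub _ _
        _ ≤ 4 := by linarith
      have hsum0 : ∑ ℓ ∈ Finset.range Ω, 17^ℓ * δ ℓ = 0 := by
        have f1 := hDx (i+1) (by omega)
        have f2 := hDx i (by omega)
        have f3 := hDx (j+1) (by omega)
        have f4 := hDx j (by omega)
        have expand : ∑ ℓ ∈ Finset.range Ω, 17^ℓ * δ ℓ
            = ((∑ ℓ ∈ Finset.range Ω, (17^ℓ:ℤ) * Bt τ (ℓ + (i+1)))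
              - (∑ ℓ ∈ Finset.range Ω, (17^ℓ:ℤ) * Bt τ (ℓ + i)))
              - ((∑ ℓ ∈ Finset.range Ω, (17^ℓ:ℤ) * Bt τ (ℓ + (j+1)))
              - (∑ ℓ ∈ Finset.range Ω, (17^ℓ:ℤ) * Bt τ (ℓ + j))) := by
          rw [← Finset.sum_sub_distrib, ← Finset.sum_sub_distrib, ← Finset.sum_sub_distrib]
          refine Finset.sum_congr rfl ?_
          intro ℓ _
          simp only [hδdef]
          ring
        rw [expand, ← f1, ← f2, ← f3, ← f4]
        linarith [hDdiff]
      have hδ0 := digits_zero δ hδb Ω hsum0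
      have hz1 := hδ0 ℓ₁ hℓ1
      have hz2 := hδ0 ℓ₂ hℓ2
      -- evaluate the four `gt` values
      have hb11 : bit 1 1 = 0 := by rw [bit_def]; norm_num
      have hb31 : bit 3 1 = 1 := by rw [bit_def]; norm_num
      have E1 := gt_eval τ c 1 (by norm_num)
      have E2 := gt_eval τ c 3 (by norm_num)
      have hpow22 : (2:ℕ)^(m+2) = 2*2^(m+1) := by rw [pow_succ]; ring
      have hqodd1 : (q + 2^(m+2)) % 2 = 1 := by omega
      have hqodd2 : (q + 3*2^(m+2)) % 2 = 1 := by omega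
      have E3 := gt_eval τ s (q + 2^(m+2)) hqodd1
      have E4 := gt_eval τ s (q + 3*2^(m+2)) hqodd2
      have hbq1 : bit (q + 2^(m+2)) 1 = bit q 1 := by
        rw [show (2:ℕ)^(m+2) = 4*(2^m) from by rw [pow_add]; ring]
        exact bit1_add4 q (2^m)
      have hbq2 : bit (q + 3*2^(m+2)) 1 = bit q 1 := by
        rw [show 3*(2:ℕ)^(m+2) = 4*(3*2^m) from by rw [pow_add]; ring]
        exact bit1_add4 q (3*2^m)
      have hcs : (2:ℕ)^c = 2^s * 2^(m+2) := by rw [hcdef, pow_add]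
      have hps1 : 2^s*(q + 2^(m+2)) = (j-i) + 2^c := by rw [hcs, hpq]; ring
      have hps2 : 2^s*(q + 3*2^(m+2)) = (j-i) + 3*2^c := by rw [hcs, hpq]; ring
      have harr1 : ℓ₁ + i = 2^c*1 - 1 := by omega
      have harr2 : ℓ₁ + (i+1) = 2^c*1 := by omega
      have harr3 : ℓ₁ + j = 2^s*(q + 2^(m+2)) - 1 := by omega
      have harr4 : ℓ₁ + (j+1) = 2^s*(q + 2^(m+2)) := by omega
      have harr5 : ℓ₂ + i = 2^c*3 - 1 := by omega
      have harr6 : ℓ₂ + (i+1) = 2^c*3 := by omega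
      have harr7 : ℓ₂ + j = 2^s*(q + 3*2^(m+2)) - 1 := by omega
      have harr8 : ℓ₂ + (j+1) = 2^s*(q + 3*2^(m+2)) := by omega
      have hcne : ¬(c = 0) := by omega
      simp only [hδdef] at hz1 hz2
      rw [harr1, harr2, harr3, harr4, E1, E3, if_neg hcne, hb11, hbq1] at hz1
      rw [harr5, harr6, harr7, harr8, E2, E4, if_neg hcne, hb31, hbq2] at hz2
      rcases hτpm (c+1) with h | h <;> rw [h] at hz1 hz2 <;> push_cast at hz1 hz2 <;> linarith
end
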